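/- arXiv:2601.10815 — 11 statements merged into one kernel-verified Lean document; each statement's English description precedes it below -/
import Mathlib

section
/- Let D, B : ℝ → Matrix n n ℝ with D differentiable and satisfying the Lax equation D'(t) = B t · D t − D t · B t for all t. Then the flow is isospectral: for all t, the characteristic polynomial of D t equals the characteristic polynomial of D 0. -/
/-!
Along a Lax flow `M' = B M - M B`, Jacobi's formula gives
`(det M)' = tr ((B M - M B) adj M) = tr (B M adj M) - tr (M B adj M)`, which vanishes because
`M adj M = adj M M = det M • 1` and the trace is cyclic. Since `x • 1 - D t` is again a Lax flow
for the same `B`, every value `det (x • 1 - D t)` of the characteristic polynomial is constant in `t`.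
-/

attribute [local instance] Matrix.normedAddCommGroup Matrix.normedSpace

open Matrix

namespace Matrix

variable {n : Type*} [Fintype n] [DecidableEq n]

section CommRing

variable {R : Type*} [CommRing R]

theorem sum_det_updateRow_eq_trace_mul_adjugate (A C : Matrix n n R) :
    ∑ i, (A.updateRow i (C i)).det = trace (C * adjugate A) := by
  simp only [← cramer_transpose_apply, cramer_eq_adjugate_mulVec, ← adjugate_transpose]
  simp [trace, mulVec, dotProduct, mul_apply, mul_comm]

theorem trace_commutator_mul_adjugate (A B : Matrix n n R) :
    trace ((B * A - A * B) * adjugate A) = 0 := by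
  rw [sub_mul, trace_sub, Matrix.mul_assoc, mul_adjugate, Matrix.mul_assoc, trace_mul_comm A,
    Matrix.mul_assoc, adjugate_mul, sub_self]

end CommRing

section NormedField

variable {𝕜 : Type*} [NontriviallyNormedField 𝕜]

noncomputable def detRowContinuousMultilinear :
    ContinuousMultilinearMap 𝕜 (fun _ : n => n → 𝕜) 𝕜 :=
  ⟨(detRowAlternating : (n → 𝕜) [⋀^n]→ₗ[𝕜] 𝕜).toMultilinearMap, continuous_id.matrix_det⟩

theorem _root_.HasDerivAt.matrix_det {M : 𝕜 → Matrix n n 𝕜} {M' : Matrix n n 𝕜} {t : 𝕜}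
    (h : HasDerivAt M M' t) :
    HasDerivAt (fun s => (M s).det) (trace (M' * adjugate (M t))) t := by
  have h_det := (detRowContinuousMultilinear.hasFDerivAt (M t)).comp_hasDerivAt t h
  rw [← sum_det_updateRow_eq_trace_mul_adjugate]
  exact h_det.congr_deriv (detRowContinuousMultilinear.linearDeriv_apply (M t) M')

theorem _root_.HasDerivAt.scalar_sub_of_commutator {M : 𝕜 → Matrix n n 𝕜} {B : Matrix n n 𝕜}
    {t : 𝕜} (h : HasDerivAt M (B * M t - M t * B) t) (c : 𝕜) :
    HasDerivAt (fun s => scalar n c - M s) (B * (scalar n c - M t) - (scalar n c - M t) * B) t := by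
  refine (h.const_sub (scalar n c)).congr_deriv ?_
  rw [mul_sub, sub_mul, (scalar_commute c (Commute.all c) B).eq]
  abel

end NormedField

theorem det_eq_of_hasDerivAt_commutator {𝕜 : Type*} [RCLike 𝕜] {M B : 𝕜 → Matrix n n 𝕜}
    (hM : ∀ t, HasDerivAt M (B t * M t - M t * B t) t) (t s : 𝕜) : (M t).det = (M s).det :=
  is_const_of_deriv_eq_zero (fun u => (hM u).matrix_det.differentiableAt)
    (fun u => by rw [(hM u).matrix_det.deriv, trace_commutator_mul_adjugate]) t s

end Matrix

/-- A Lax flow `D' = B D - D B` is isospectral: the characteristic polynomial is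
constant in time. -/
theorem lax_flow_isospectral {n : Type*} [Fintype n] [DecidableEq n]
    (D B : ℝ → Matrix n n ℝ)
    (hLax : ∀ t, HasDerivAt D (B t * D t - D t * B t) t) :
    ∀ t, (D t).charpoly = (D 0).charpoly := by
  intro t
  refine Polynomial.funext fun x => ?_
  rw [eval_charpoly, eval_charpoly]
  exact det_eq_of_hasDerivAt_commutator (fun s => (hLax s).scalar_sub_of_commutator x) t 0
end

section
/- Let B : ℝ → Matrix n n ℝ be continuous, let D : ℝ → Matrix n n ℝ be differentiable with D'(t) = D t · B t − B t · D t for all t, and let u : ℝ → (n → ℝ) be differentiable with u'(t) = −(B t) ·ᵥ (u t) for all t. If D 0 ·ᵥ u 0 = 0, then D t ·ᵥ u t = 0 for all t. (Vectors in the kernel of D are transported along the Lax deformation, so the kernel dimension is preserved.) -/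
/-! The Lax equation makes the `B`-terms cancel in the product rule:
`(D u)' = (D B - B D) u - D B u = -B (D u)`, so `w = D u` solves the same linear ODE
`w' = -B w` as `u`. A linear ODE with continuous coefficients is Lipschitz in the state,
uniformly on compact time intervals, so by Grönwall uniqueness the solution with
`w 0 = 0` is identically zero. -/

attribute [local instance] Matrix.normedAddCommGroup Matrix.normedSpace

open Matrix

open Set in
theorem eq_zero_of_hasDerivAt_clm_apply {E : Type*} [NormedAddCommGroup E] [NormedSpace ℝ E]
    {A : ℝ → E →L[ℝ] E} {w : ℝ → E} (hA : Continuous A)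
    (hw : ∀ t, HasDerivAt w (A t (w t)) t) {t₀ : ℝ} (h₀ : w t₀ = 0) (t : ℝ) : w t = 0 := by
  set a := min t t₀ - 1
  set b := max t t₀ + 1
  have ht : t ∈ Ioo a b := ⟨by linarith [min_le_left t t₀], by linarith [le_max_left t t₀]⟩
  have ht₀ : t₀ ∈ Ioo a b := ⟨by linarith [min_le_right t t₀], by linarith [le_max_right t t₀]⟩
  obtain ⟨C, hC⟩ :=
    isCompact_Icc.exists_bound_of_continuousOn (hA.norm.continuousOn (s := Icc a b))
  have hlip : ∀ s ∈ Ioo a b, LipschitzOnWith C.toNNReal (A s) univ := fun s hs =>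
    ((A s).lipschitz.weaken (NNReal.le_toNNReal_of_coe_le <| by
      simpa using hC s (Ioo_subset_Icc_self hs))).lipschitzOnWith
  have hzero : EqOn w 0 (Icc a b) :=
    ODE_solution_unique_of_mem_Icc hlip ht₀
      (HasDerivAt.continuousOn fun s _ => hw s) (fun s _ => hw s) (fun _ _ => trivial)
      continuousOn_const (fun s _ => by simp) (fun _ _ => trivial) h₀
  exact hzero (Ioo_subset_Icc_self ht)

namespace Matrix

variable {𝕜 : Type*} [NontriviallyNormedField 𝕜] [CompleteSpace 𝕜]
  {m n : Type*} [Fintype m] [Fintype n]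

variable (𝕜) in
noncomputable def mulVecCLM : Matrix m n 𝕜 →L[𝕜] (n → 𝕜) →L[𝕜] m → 𝕜 :=
  LinearMap.toContinuousLinearMap
    (LinearMap.toContinuousLinearMap.toLinearMap ∘ₗ mulVecBilin 𝕜 𝕜)

@[simp]
theorem mulVecCLM_apply (M : Matrix m n 𝕜) (v : n → 𝕜) :
    mulVecCLM 𝕜 M v = M *ᵥ v := rfl

theorem _root_.HasDerivAt.matrix_mulVec {M : 𝕜 → Matrix m n 𝕜} {v : 𝕜 → n → 𝕜}
    {M' : Matrix m n 𝕜} {v' : n → 𝕜} {x : 𝕜} (hM : HasDerivAt M M' x) (hv : HasDerivAt v v' x) :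
    HasDerivAt (fun y => M y *ᵥ v y) (M' *ᵥ v x + M x *ᵥ v') x :=
  ((mulVecCLM 𝕜 : Matrix m n 𝕜 →L[𝕜] _).hasFDerivAt.comp_hasDerivAt x hM).clm_apply hv

end Matrix

theorem lax_flow_kernel_transport_general {n : Type*} [Fintype n]
    (B D : ℝ → Matrix n n ℝ) (u : ℝ → (n → ℝ))
    (hB : Continuous B)
    (hD : ∀ t, HasDerivAt D (D t * B t - B t * D t) t)
    (hu : ∀ t, HasDerivAt u (-(B t).mulVec (u t)) t)
    (h0 : (D 0).mulVec (u 0) = 0) :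
    ∀ t, (D t).mulVec (u t) = 0 := by
  have hDu : ∀ t, HasDerivAt (fun s => D s *ᵥ u s) (-(B t *ᵥ (D t *ᵥ u t))) t := fun t => by
    convert (hD t).matrix_mulVec (hu t) using 1
    simp only [sub_mulVec, mulVec_neg, mulVec_mulVec]
    abel
  exact eq_zero_of_hasDerivAt_clm_apply (A := fun t => mulVecCLM ℝ (-B t))
    ((mulVecCLM ℝ).continuous.comp hB.neg) (fun t => by simpa [neg_mulVec] using hDu t) h0

/-- Vectors in the kernel of `D` are transported along the Lax deformation:
if `u' = -B u` and `D' = D B - B D`, then `D t ·ᵥ u t` stays zero. -/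
theorem lax_flow_kernel_transport {n : Type*} [Fintype n] [DecidableEq n]
    (B D : ℝ → Matrix n n ℝ) (u : ℝ → (n → ℝ))
    (hB : Continuous B)
    (hD : ∀ t, HasDerivAt D (D t * B t - B t * D t) t)
    (hu : ∀ t, HasDerivAt u (-(B t).mulVec (u t)) t)
    (h0 : (D 0).mulVec (u 0) = 0) :
    ∀ t, (D t).mulVec (u t) = 0 :=
  lax_flow_kernel_transport_general B D u hB hD hu h0
end

section
/- Let n be a finite index type with a degree function deg : n → ℕ, and let d be a real n×n matrix such that d_{ij} = 0 unless deg j = deg i + 1, and d · d = 0. Set D = d + dᵀ. Then for every real polynomial g, the matrix g(D) has the same Jacobi block structure as D: (g(D))_{ij} = 0 whenever |(deg i : ℤ) − (deg j : ℤ)| ≥ 2. -/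
/-!
Split `D = d + dᵀ` into its degree-raising and degree-lowering parts. Since `d * d = 0`, also
`dᵀ * dᵀ = 0`, so `D * D = d * dᵀ + dᵀ * d` preserves degrees. Hence the even powers `(D * D) ^ m`
preserve degrees and the odd powers `(D * D) ^ m * D` shift them by at most one, and so does every
linear combination `g(D)` of powers of `D`.
-/

open Matrix Polynomial

section GradedMatrices

variable {n R : Type*} [CommSemiring R]

def blockTridiagonal (deg : n → ℤ) : Submodule R (Matrix n n R) where
  carrier := {M | ∀ i j, 2 ≤ |deg i - deg j| → M i j = 0}
  add_mem' hM hN i j hij := by rw [Matrix.add_apply, hM i j hij, hN i j hij, add_zero]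
  zero_mem' _ _ _ := rfl
  smul_mem' r M hM i j hij := by rw [Matrix.smul_apply, hM i j hij, smul_zero]

theorem add_transpose_mem_blockTridiagonal {deg : n → ℤ} {d : Matrix n n R}
    (hd : ∀ i j, deg j ≠ deg i + 1 → d i j = 0) : d + dᵀ ∈ blockTridiagonal deg := by
  intro i j hij
  rw [Matrix.add_apply, transpose_apply, hd i j fun h => by simp [h] at hij,
    hd j i fun h => by simp [h] at hij, add_zero]

variable [Fintype n] [DecidableEq n]

def degreePreservingSubalgebra (deg : n → ℤ) : Subalgebra R (Matrix n n R) where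
  carrier := {M | ∀ i j, deg i ≠ deg j → M i j = 0}
  mul_mem' hM hN i j hij := by
    rw [mul_apply]
    refine Finset.sum_eq_zero fun k _ => ?_
    by_cases hik : deg i = deg k
    · rw [hN k j (hik ▸ hij), mul_zero]
    · rw [hM i k hik, zero_mul]
  add_mem' hM hN i j hij := by rw [Matrix.add_apply, hM i j hij, hN i j hij, add_zero]
  algebraMap_mem' r i j hij := by
    rw [algebraMap_matrix_apply, if_neg (by rintro rfl; exact hij rfl)]

variable {deg : n → ℤ}

theorem mem_blockTridiagonal_of_mem_degreePreserving {M : Matrix n n R}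
    (hM : M ∈ degreePreservingSubalgebra deg) : M ∈ blockTridiagonal deg :=
  fun i j hij => hM i j fun h => by simp [h] at hij

theorem mul_mem_blockTridiagonal {M N : Matrix n n R} (hM : M ∈ degreePreservingSubalgebra deg)
    (hN : N ∈ blockTridiagonal deg) : M * N ∈ blockTridiagonal deg := by
  intro i j hij
  rw [mul_apply]
  refine Finset.sum_eq_zero fun k _ => ?_
  by_cases hik : deg i = deg k
  · rw [hN k j (hik ▸ hij), mul_zero]
  · rw [hM i k hik, zero_mul]

theorem aeval_mem_blockTridiagonal {M : Matrix n n R} (hM : M ∈ blockTridiagonal deg)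
    (hMM : M * M ∈ degreePreservingSubalgebra deg) (g : R[X]) :
    aeval M g ∈ blockTridiagonal deg := by
  have hpow (k : ℕ) : M ^ k ∈ blockTridiagonal deg := by
    obtain ⟨m, rfl | rfl⟩ := k.even_or_odd'
    · rw [pow_mul, sq]
      exact mem_blockTridiagonal_of_mem_degreePreserving (Subalgebra.pow_mem _ hMM m)
    · rw [pow_succ, pow_mul, sq]
      exact mul_mem_blockTridiagonal (Subalgebra.pow_mem _ hMM m) hM
  rw [aeval_eq_sum_range]
  exact Submodule.sum_mem _ fun k _ => Submodule.smul_mem _ _ (hpow k)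

section DegreeRaising

variable {d : Matrix n n R} (hd : ∀ i j, deg j ≠ deg i + 1 → d i j = 0)
include hd

theorem mul_transpose_mem_degreePreserving : d * dᵀ ∈ degreePreservingSubalgebra deg := by
  intro i j hij
  rw [mul_apply]
  refine Finset.sum_eq_zero fun k _ => ?_
  by_cases hik : deg k = deg i + 1
  · rw [transpose_apply, hd j k fun h => hij (by omega), mul_zero]
  · rw [hd i k hik, zero_mul]

theorem transpose_mul_mem_degreePreserving : dᵀ * d ∈ degreePreservingSubalgebra deg := by
  intro i j hij
  rw [mul_apply]
  refine Finset.sum_eq_zero fun k _ => ?_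
  by_cases hik : deg i = deg k + 1
  · rw [hd k j fun h => hij (by omega), mul_zero]
  · rw [transpose_apply, hd k i hik, zero_mul]

theorem add_transpose_mul_self_mem_degreePreserving (hdd : d * d = 0) :
    (d + dᵀ) * (d + dᵀ) ∈ degreePreservingSubalgebra deg := by
  have hdd' : dᵀ * dᵀ = 0 := by rw [← transpose_mul, hdd, transpose_zero]
  have hsq : (d + dᵀ) * (d + dᵀ) = d * dᵀ + dᵀ * d := by
    rw [add_mul, mul_add, mul_add, hdd, hdd', zero_add, add_zero]
  rw [hsq]
  exact add_mem (mul_transpose_mem_degreePreserving hd) (transpose_mul_mem_degreePreserving hd)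

end DegreeRaising

end GradedMatrices

/-- If `d` raises the degree by exactly one and `d * d = 0`, then for every polynomial `g`
the matrix `g(d + dᵀ)` has block Jacobi structure: its `(i,j)` entry vanishes whenever
the degrees of `i` and `j` differ by at least `2`. -/
theorem aeval_dirac_block_tridiagonal {n : Type*} [Fintype n] [DecidableEq n]
    (deg : n → ℕ) (d : Matrix n n ℝ)
    (hd : ∀ i j, deg j ≠ deg i + 1 → d i j = 0)
    (hdd : d * d = 0) (g : Polynomial ℝ) :
    ∀ i j, 2 ≤ |(deg i : ℤ) - (deg j : ℤ)| →
      (Polynomial.aeval (d + dᵀ) g) i j = 0 := by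
  have hd' : ∀ i j, (deg j : ℤ) ≠ deg i + 1 → d i j = 0 :=
    fun i j h => hd i j fun h' => h (by exact_mod_cast h')
  exact aeval_mem_blockTridiagonal (add_transpose_mem_blockTridiagonal hd')
    (add_transpose_mul_self_mem_degreePreserving hd' hdd) g
end

section
/- Let D and ε be symmetric real n×n matrices with ε · ε = 1 and ε · D = −(D · ε). Then for every real t, the supertrace of the heat kernel is time independent: trace(ε · exp(−t · D²)) = trace(ε). (McKean–Singer: str(e^{−tL}) = χ(G) for the Hodge Laplacian L = D² with grading ε.) -/
/-!
Expand `exp (-t D²)` as a power series. Every term of positive degree is a multiple of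
`ε * D ^ (2k)`, whose trace vanishes: moving one factor `D` cyclically around the trace and back
past `ε` changes the sign. Only the constant term `trace ε` survives.
-/

open Matrix

namespace Matrix

variable {n : Type*} [Fintype n] [DecidableEq n]

theorem trace_mul_pow_eq_zero_of_mul_eq_neg_mul {R : Type*} [CommRing R] [IsAddTorsionFree R]
    {ε D : Matrix n n R} (h : ε * D = -(D * ε)) {k : ℕ} (hk : k ≠ 0) :
    (ε * D ^ k).trace = 0 := by
  obtain ⟨m, rfl⟩ := Nat.exists_eq_succ_of_ne_zero hk
  have h_neg : (ε * D ^ (m + 1)).trace = -(ε * D ^ (m + 1)).trace :=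
    calc (ε * D ^ (m + 1)).trace = -(D * (ε * D ^ m)).trace := by
          rw [pow_succ', ← mul_assoc, h, neg_mul, mul_assoc, trace_neg]
      _ = -(ε * D ^ (m + 1)).trace := by rw [trace_mul_comm, mul_assoc, ← pow_succ]
  exact self_eq_neg.mp h_neg

theorem trace_mul_exp_eq_trace_of_trace_mul_pow_eq_zero {𝕂 : Type*} [RCLike 𝕂]
    {ε A : Matrix n n 𝕂} (h : ∀ k ≠ 0, (ε * A ^ k).trace = 0) :
    (ε * NormedSpace.exp A).trace = ε.trace := by
  have h_exp : HasSum (fun k : ℕ => (k.factorial⁻¹ : 𝕂) • A ^ k) (NormedSpace.exp A) :=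
    open scoped Norms.Operator in NormedSpace.exp_series_hasSum_exp' A
  have h_series : HasSum (fun k : ℕ => (k.factorial⁻¹ : 𝕂) • (ε * A ^ k).trace)
      (ε * NormedSpace.exp A).trace := by
    simpa only [Function.comp_def, traceAddMonoidHom_apply, mul_smul_comm, trace_smul] using
      (h_exp.mul_left ε).map (traceAddMonoidHom n 𝕂) (continuous_id.matrix_trace)
  refine h_series.unique (hasSum_single 0 fun k hk => ?_) |>.trans ?_
  · simp [h k hk]
  · simp

end Matrix

theorem mckean_singer_heat_general {n : Type*} [Fintype n] [DecidableEq n]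
    (D ε : Matrix n n ℝ) (hanti : ε * D = -(D * ε)) :
    ∀ t : ℝ, (ε * NormedSpace.exp (-(t • (D * D)))).trace = ε.trace := by
  intro t
  refine trace_mul_exp_eq_trace_of_trace_mul_pow_eq_zero fun k hk => ?_
  have h_pow : (-(t • (D * D))) ^ k = (-t) ^ k • D ^ (2 * k) := by
    rw [← neg_smul, ← sq, smul_pow, pow_mul]
  rw [h_pow, mul_smul_comm, trace_smul,
    trace_mul_pow_eq_zero_of_mul_eq_neg_mul hanti (by omega), smul_zero]

/-- McKean–Singer: if `ε` is a symmetric involution anticommuting with the symmetric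
matrix `D`, then the supertrace of the heat kernel `exp (-t D²)` is time independent
and equals `trace ε`. -/
theorem mckean_singer_heat {n : Type*} [Fintype n] [DecidableEq n]
    (D ε : Matrix n n ℝ) (hD : D.IsSymm) (hε : ε.IsSymm)
    (hinv : ε * ε = 1) (hanti : ε * D = -(D * ε)) :
    ∀ t : ℝ, (ε * NormedSpace.exp (-(t • (D * D)))).trace = ε.trace :=
  mckean_singer_heat_general D ε hanti
end

section
/- Let D and ε be symmetric real n×n matrices with ε · ε = 1 and ε · D = −(D · ε), and set L = D². Then for every real λ ≠ 0, the even and odd parts of the λ-eigenspace of L have the same dimension: the dimension of {v : n → ℝ | L ·ᵥ v = λ • v and ε ·ᵥ v = v} equals the dimension of {v : n → ℝ | L ·ᵥ v = λ • v and ε ·ᵥ v = −v}. (McKean–Singer symmetry: the nonzero spectrum of L on even forms agrees with the nonzero spectrum on odd forms.) -/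
/-!
Since `D` anticommutes with the grading `ε`, it maps the `+1`-eigenspace of `ε` into the
`-1`-eigenspace and back; since it commutes with `L = D²`, it preserves the `λ`-eigenspace of
`L`. On that eigenspace `D² = λ`, so for `λ ≠ 0` the map `λ⁻¹ • D` inverts `D`, and `D` is an
isomorphism between the even and the odd part.
-/

open Matrix

section

variable {K V : Type*} [Field K] [AddCommGroup V] [Module K V]

theorem LinearMap.apply_mem_ker_comp_self_sub_smul_id (D : V →ₗ[K] V) (lam : K) {v : V}
    (hv : v ∈ LinearMap.ker (D ∘ₗ D - lam • LinearMap.id)) :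
    D v ∈ LinearMap.ker (D ∘ₗ D - lam • LinearMap.id) := by
  simp only [LinearMap.mem_ker, LinearMap.sub_apply, LinearMap.comp_apply, LinearMap.smul_apply,
    LinearMap.id_apply, sub_eq_zero] at hv ⊢
  rw [hv, map_smul]

theorem LinearMap.apply_mem_ker_add_id_of_anticomm {D ε : V →ₗ[K] V} (hanti : ε ∘ₗ D = -(D ∘ₗ ε))
    {v : V} (hv : v ∈ LinearMap.ker (ε - LinearMap.id)) :
    D v ∈ LinearMap.ker (ε + LinearMap.id) := by
  simp only [LinearMap.mem_ker, LinearMap.sub_apply, LinearMap.add_apply, LinearMap.id_apply,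
    sub_eq_zero] at hv ⊢
  rw [← LinearMap.comp_apply, hanti, LinearMap.neg_apply, LinearMap.comp_apply, hv, neg_add_cancel]

theorem LinearMap.apply_mem_ker_sub_id_of_anticomm {D ε : V →ₗ[K] V} (hanti : ε ∘ₗ D = -(D ∘ₗ ε))
    {v : V} (hv : v ∈ LinearMap.ker (ε + LinearMap.id)) :
    D v ∈ LinearMap.ker (ε - LinearMap.id) := by
  simp only [LinearMap.mem_ker, LinearMap.sub_apply, LinearMap.add_apply, LinearMap.id_apply,
    add_eq_zero_iff_eq_neg] at hv ⊢
  rw [← LinearMap.comp_apply, hanti, LinearMap.neg_apply, LinearMap.comp_apply, hv, map_neg,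
    neg_neg, sub_self]

def LinearMap.restrictEquivOfCompSelfEqSMul (f : V →ₗ[K] V) {p q : Submodule K V}
    (hpq : ∀ v ∈ p, f v ∈ q) (hqp : ∀ v ∈ q, f v ∈ p) {c : K} (hc : c ≠ 0)
    (hp : ∀ v ∈ p, f (f v) = c • v) (hq : ∀ v ∈ q, f (f v) = c • v) : p ≃ₗ[K] q :=
  LinearEquiv.ofLinearMap (f.restrict hpq) (c⁻¹ • f.restrict hqp)
    (by ext ⟨v, hv⟩; simp [hq v hv, hc])
    (by ext ⟨v, hv⟩; simp [hp v hv, hc])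

theorem LinearMap.finrank_inf_ker_sub_id_eq_finrank_inf_ker_add_id {D ε : V →ₗ[K] V}
    (hanti : ε ∘ₗ D = -(D ∘ₗ ε)) {lam : K} (hlam : lam ≠ 0) :
    Module.finrank K
      (LinearMap.ker (D ∘ₗ D - lam • LinearMap.id) ⊓ LinearMap.ker (ε - LinearMap.id) :
        Submodule K V) =
    Module.finrank K
      (LinearMap.ker (D ∘ₗ D - lam • LinearMap.id) ⊓ LinearMap.ker (ε + LinearMap.id) :
        Submodule K V) := by
  have sq_eq_smul : ∀ v ∈ LinearMap.ker (D ∘ₗ D - lam • LinearMap.id), D (D v) = lam • v :=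
    fun v hv ↦ by simpa [sub_eq_zero] using hv
  refine LinearEquiv.finrank_eq <| D.restrictEquivOfCompSelfEqSMul ?_ ?_ hlam
    (fun v hv ↦ sq_eq_smul v hv.1) (fun v hv ↦ sq_eq_smul v hv.1)
  · exact fun v ⟨hL, hε⟩ ↦ ⟨D.apply_mem_ker_comp_self_sub_smul_id lam hL,
      LinearMap.apply_mem_ker_add_id_of_anticomm hanti hε⟩
  · exact fun v ⟨hL, hε⟩ ↦ ⟨D.apply_mem_ker_comp_self_sub_smul_id lam hL,
      LinearMap.apply_mem_ker_sub_id_of_anticomm hanti hε⟩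

end

theorem mckean_singer_eigenspace_symmetry_general {n : Type*} [Fintype n] [DecidableEq n]
    (D ε : Matrix n n ℝ)
    (hanti : ε * D = -(D * ε)) (lam : ℝ) (hlam : lam ≠ 0) :
    Module.finrank ℝ
      ((LinearMap.ker ((D * D).mulVecLin - lam • LinearMap.id)) ⊓
        (LinearMap.ker (ε.mulVecLin - LinearMap.id)) : Submodule ℝ (n → ℝ)) =
    Module.finrank ℝ
      ((LinearMap.ker ((D * D).mulVecLin - lam • LinearMap.id)) ⊓
        (LinearMap.ker (ε.mulVecLin + LinearMap.id)) : Submodule ℝ (n → ℝ)) := by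
  have hanti' : ε.mulVecLin ∘ₗ D.mulVecLin = -(D.mulVecLin ∘ₗ ε.mulVecLin) := by
    rw [← mulVecLin_mul, ← mulVecLin_mul, hanti]
    ext v
    simp
  rw [mulVecLin_mul]
  exact LinearMap.finrank_inf_ker_sub_id_eq_finrank_inf_ker_add_id hanti' hlam

/-- McKean–Singer symmetry: for a nonzero eigenvalue `λ` of `L = D²`, the even part and
the odd part (with respect to the grading involution `ε`) of the `λ`-eigenspace have
the same dimension. -/
theorem mckean_singer_eigenspace_symmetry {n : Type*} [Fintype n] [DecidableEq n]
    (D ε : Matrix n n ℝ) (hD : D.IsSymm) (hε : ε.IsSymm)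
    (hinv : ε * ε = 1) (hanti : ε * D = -(D * ε)) (lam : ℝ) (hlam : lam ≠ 0) :
    Module.finrank ℝ
      ((LinearMap.ker ((D * D).mulVecLin - lam • LinearMap.id)) ⊓
        (LinearMap.ker (ε.mulVecLin - LinearMap.id)) : Submodule ℝ (n → ℝ)) =
    Module.finrank ℝ
      ((LinearMap.ker ((D * D).mulVecLin - lam • LinearMap.id)) ⊓
        (LinearMap.ker (ε.mulVecLin + LinearMap.id)) : Submodule ℝ (n → ℝ)) :=
  mckean_singer_eigenspace_symmetry_general D ε hanti lam hlam
end

section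
/- Let G and H be simple graphs on the same finite vertex set of n elements, and let λ₁ ≤ … ≤ λ_n and μ₁ ≤ … ≤ μ_n be the eigenvalues of their Kirchhoff Laplacians listed in nondecreasing order with multiplicity. Then Σ_{j=1}^{n} |λ_j − μ_j| ≤ 4·d(G,H), where d(G,H) is the number of edges in the symmetric difference of the edge sets of G and H. -/
/-!
Put `K = G ⊓ H`. The Laplacian quadratic form `∑_{ij ∈ E} (xᵢ - xⱼ)²` is monotone in the edge
set, so `L_K ≤ L_G` and `L_K ≤ L_H` in the Loewner order, and by Weyl's monotonicity principle the
ascending spectrum `ν` of `L_K` lies below both `λ` and `μ`. Hence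
`∑ |λⱼ - μⱼ| ≤ ∑ (λⱼ - νⱼ) + (μⱼ - νⱼ) = tr L_G + tr L_H - 2 tr L_K`, and since `tr L = 2 |E|`
this equals `2 (|E(G)| + |E(H)| - 2 |E(G) ∩ E(H)|) = 2 d(G, H)`.
-/

open Matrix Finset

theorem Monotone.eq_of_map_univ_val_eq {α : Type*} [LinearOrder α] {n : ℕ} {f g : Fin n → α}
    (hf : Monotone f) (hg : Monotone g)
    (h : (univ.val : Multiset (Fin n)).map f = (univ.val : Multiset (Fin n)).map g) : f = g := by
  rw [Fin.univ_val_map, Fin.univ_val_map, Multiset.coe_eq_coe] at h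
  exact List.ofFn_injective (h.eq_of_sortedLE hf.sortedLE_ofFn hg.sortedLE_ofFn)

theorem Module.exists_ne_zero_forall_dual_eq_zero {K V ι : Type*} [Field K] [AddCommGroup V]
    [Module K V] [FiniteDimensional K V] [Fintype ι] (φ : ι → Module.Dual K V)
    (h : Fintype.card ι < Module.finrank K V) : ∃ x ≠ 0, ∀ i, φ i x = 0 := by
  have hker : LinearMap.ker (LinearMap.pi φ) ≠ ⊥ :=
    LinearMap.ker_ne_bot_of_finrank_lt (by rwa [Module.finrank_fintype_fun_eq_card])
  obtain ⟨x, hx, hx0⟩ := Submodule.exists_mem_ne_zero_of_ne_bot hker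
  exact ⟨x, hx0, fun i => congrFun (LinearMap.mem_ker.mp hx) i⟩

namespace LinearMap.IsSymmetric

variable {𝕜 E : Type*} [RCLike 𝕜] [NormedAddCommGroup E] [InnerProductSpace 𝕜 E]
  [FiniteDimensional 𝕜 E] {T S : E →ₗ[𝕜] E} {n : ℕ} (hn : Module.finrank 𝕜 E = n)

theorem re_inner_apply_self_eq_sum (hT : T.IsSymmetric) (x : E) :
    RCLike.re (inner 𝕜 (T x) x) =
      ∑ i, hT.eigenvalues hn i * ‖(hT.eigenvectorBasis hn).repr x i‖ ^ 2 := by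
  set b := hT.eigenvectorBasis hn
  rw [← b.repr.inner_map_map, PiLp.inner_apply, map_sum]
  refine Finset.sum_congr rfl fun i _ => ?_
  rw [hT.eigenvectorBasis_apply_self_apply, RCLike.inner_apply, (starRingEnd 𝕜).map_mul,
    RCLike.conj_ofReal, mul_left_comm, RCLike.mul_conj]
  norm_cast

theorem mul_norm_sq_le_re_inner_apply_self (hT : T.IsSymmetric) {x : E} {c : ℝ}
    (h : ∀ i, (hT.eigenvectorBasis hn).repr x i ≠ 0 → c ≤ hT.eigenvalues hn i) :
    c * ‖x‖ ^ 2 ≤ RCLike.re (inner 𝕜 (T x) x) := by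
  rw [hT.re_inner_apply_self_eq_sum hn, ← (hT.eigenvectorBasis hn).repr.norm_map,
    EuclideanSpace.norm_sq_eq, mul_sum]
  refine sum_le_sum fun i _ => ?_
  by_cases hi : (hT.eigenvectorBasis hn).repr x i = 0
  · simp [hi]
  · exact mul_le_mul_of_nonneg_right (h i hi) (sq_nonneg _)

theorem re_inner_apply_self_le_mul_norm_sq (hT : T.IsSymmetric) {x : E} {c : ℝ}
    (h : ∀ i, (hT.eigenvectorBasis hn).repr x i ≠ 0 → hT.eigenvalues hn i ≤ c) :
    RCLike.re (inner 𝕜 (T x) x) ≤ c * ‖x‖ ^ 2 := by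
  rw [hT.re_inner_apply_self_eq_sum hn, ← (hT.eigenvectorBasis hn).repr.norm_map,
    EuclideanSpace.norm_sq_eq, mul_sum]
  refine sum_le_sum fun i _ => ?_
  by_cases hi : (hT.eigenvectorBasis hn).repr x i = 0
  · simp [hi]
  · exact mul_le_mul_of_nonneg_right (h i hi) (sq_nonneg _)

theorem eigenvalues_le_eigenvalues (hT : T.IsSymmetric) (hS : S.IsSymmetric) (hTS : T ≤ S)
    (k : Fin n) : hT.eigenvalues hn k ≤ hS.eigenvalues hn k := by
  set b := hT.eigenvectorBasis hn
  set c := hS.eigenvectorBasis hn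
  -- A nonzero `x` in the span of `b 0, …, b k` and of `c k, …, c (n-1)`: `n - 1` linear conditions.
  obtain ⟨x, hx0, hx⟩ := Module.exists_ne_zero_forall_dual_eq_zero
    (fun j : {j : Fin n // j ≠ k} => if k < j.1 then innerₛₗ 𝕜 (b j) else innerₛₗ 𝕜 (c j))
    (by simpa [hn] using k.pos)
  have hb : ∀ j, b.repr x j ≠ 0 → j ≤ k := by
    intro j hj
    by_contra! hkj
    exact hj (by simpa [hkj, hkj.ne', b.repr_apply_apply] using hx ⟨j, hkj.ne'⟩)
  have hc : ∀ j, c.repr x j ≠ 0 → k ≤ j := by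
    intro j hj
    by_contra! hjk
    exact hj (by simpa [hjk.not_gt, hjk.ne, c.repr_apply_apply] using hx ⟨j, hjk.ne⟩)
  have hTS' : RCLike.re (inner 𝕜 (T x) x) ≤ RCLike.re (inner 𝕜 (S x) x) := by
    simpa [inner_sub_left] using hTS.re_inner_nonneg_left x
  refine le_of_mul_le_mul_right ?_ (by positivity : 0 < ‖x‖ ^ 2)
  calc hT.eigenvalues hn k * ‖x‖ ^ 2 ≤ RCLike.re (inner 𝕜 (T x) x) :=
        hT.mul_norm_sq_le_re_inner_apply_self hn fun j hj => hT.eigenvalues_antitone hn (hb j hj)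
    _ ≤ RCLike.re (inner 𝕜 (S x) x) := hTS'
    _ ≤ hS.eigenvalues hn k * ‖x‖ ^ 2 :=
        hS.re_inner_apply_self_le_mul_norm_sq hn fun j hj => hS.eigenvalues_antitone hn (hc j hj)

end LinearMap.IsSymmetric

open scoped MatrixOrder

namespace Matrix.IsHermitian

variable {n : Type*} [Fintype n] [DecidableEq n]

theorem eigenvalues₀_le_eigenvalues₀ {𝕜 : Type*} [RCLike 𝕜] {A B : Matrix n n 𝕜}
    (hA : A.IsHermitian) (hB : B.IsHermitian) (hAB : A ≤ B) (k : Fin (Fintype.card n)) :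
    hA.eigenvalues₀ k ≤ hB.eigenvalues₀ k :=
  LinearMap.IsSymmetric.eigenvalues_le_eigenvalues _ _ _
    (by rwa [LinearMap.le_def, ← map_sub, isPositive_toEuclideanLin_iff]) k

theorem roots_charpoly_eq_map_eigenvalues₀_rev {A : Matrix n n ℝ} (hA : A.IsHermitian) :
    A.charpoly.roots =
      (univ.val : Multiset (Fin (Fintype.card n))).map (hA.eigenvalues₀ ∘ Fin.rev) := by
  have hrev : (univ.val : Multiset (Fin (Fintype.card n))).map Fin.rev = univ.val :=
    Multiset.map_univ_val_equiv Fin.revPerm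
  rw [hA.roots_charpoly_eq_eigenvalues₀, RCLike.ofReal_real_eq_id, Function.id_comp,
    ← Multiset.map_map, hrev]

theorem eq_eigenvalues₀_rev_of_roots_charpoly_eq {A : Matrix n n ℝ} (hA : A.IsHermitian)
    {f : Fin (Fintype.card n) → ℝ} (hf : Monotone f)
    (h : A.charpoly.roots = (univ.val : Multiset (Fin (Fintype.card n))).map f) :
    f = hA.eigenvalues₀ ∘ Fin.rev :=
  hf.eq_of_map_univ_val_eq (hA.eigenvalues₀_antitone.comp Fin.rev_anti)
    (h.symm.trans hA.roots_charpoly_eq_map_eigenvalues₀_rev)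

theorem exists_monotone_roots_charpoly_eq {A : Matrix n n ℝ} (hA : A.IsHermitian) :
    ∃ f : Fin (Fintype.card n) → ℝ, Monotone f ∧
      A.charpoly.roots = (univ.val : Multiset (Fin (Fintype.card n))).map f :=
  ⟨_, hA.eigenvalues₀_antitone.comp Fin.rev_anti, hA.roots_charpoly_eq_map_eigenvalues₀_rev⟩

theorem le_of_roots_charpoly_eq {A B : Matrix n n ℝ} (hA : A.IsHermitian) (hB : B.IsHermitian)
    (hAB : A ≤ B) {f g : Fin (Fintype.card n) → ℝ} (hf : Monotone f) (hg : Monotone g)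
    (hfA : A.charpoly.roots = (univ.val : Multiset (Fin (Fintype.card n))).map f)
    (hgB : B.charpoly.roots = (univ.val : Multiset (Fin (Fintype.card n))).map g) :
    f ≤ g := by
  rw [hA.eq_eigenvalues₀_rev_of_roots_charpoly_eq hf hfA,
    hB.eq_eigenvalues₀_rev_of_roots_charpoly_eq hg hgB]
  exact fun k => eigenvalues₀_le_eigenvalues₀ hA hB hAB k.rev

end Matrix.IsHermitian

theorem Matrix.trace_eq_sum_of_roots_charpoly_eq {R n : Type*} [Field R] [Fintype n]
    [DecidableEq n] {A : Matrix n n R} {f : Fin (Fintype.card n) → R}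
    (h : A.charpoly.roots = (univ.val : Multiset (Fin (Fintype.card n))).map f) :
    A.trace = ∑ j, f j := by
  have hsplit : A.charpoly.Splits := by
    rw [Polynomial.splits_iff_card_roots, h, Multiset.card_map, charpoly_natDegree_eq_dim]
    simp
  rw [trace_eq_sum_roots_charpoly_of_splits hsplit, h]
  rfl

theorem Finset.card_symmDiff_add_two_mul_card_inter {α : Type*} [DecidableEq α] (s t : Finset α) :
    #(symmDiff s t) + 2 * #(s ∩ t) = #s + #t := by
  rw [symmDiff_def, sup_eq_union, card_union_of_disjoint disjoint_sdiff_sdiff,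
    ← card_sdiff_add_card_inter s t, ← card_sdiff_add_card_inter t s, inter_comm t s]
  ring

namespace SimpleGraph

variable {V : Type*} [Fintype V] [DecidableEq V] (R : Type*)

theorem trace_lapMatrix [NonAssocRing R] (G : SimpleGraph V) [DecidableRel G.Adj] :
    (G.lapMatrix R).trace = 2 * (#G.edgeFinset : R) := by
  rw [lapMatrix, trace_sub, trace_adjMatrix, sub_zero, degMatrix, trace_diagonal]
  exact_mod_cast congrArg (Nat.cast : ℕ → R) G.sum_degrees_eq_twice_card_edges

theorem posSemidef_lapMatrix_sub_of_le [Field R] [LinearOrder R] [IsStrictOrderedRing R]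
    [StarRing R] [TrivialStar R] {G K : SimpleGraph V} [DecidableRel G.Adj] [DecidableRel K.Adj]
    (h : K ≤ G) : (G.lapMatrix R - K.lapMatrix R).PosSemidef := by
  refine .of_dotProduct_mulVec_nonneg ((G.isHermitian_lapMatrix R).sub (K.isHermitian_lapMatrix R))
    fun x => ?_
  rw [star_trivial, sub_mulVec, dotProduct_sub, sub_nonneg, ← toLinearMap₂'_apply',
    ← toLinearMap₂'_apply', lapMatrix_toLinearMap₂', lapMatrix_toLinearMap₂']
  gcongr with i _ j _
  split_ifs with hK hG hG
  · exact le_rfl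
  · exact absurd (h hK) hG
  · exact sq_nonneg _
  · exact le_rfl

end SimpleGraph

open SimpleGraph in
/-- The `ℓ¹` distance between the ordered Kirchhoff spectra of two graphs on the same
vertex set is at most four times the number of edges in the symmetric difference of
the edge sets. -/
theorem lapMatrix_spectra_dist_le {V : Type*} [Fintype V] [DecidableEq V]
    (G H : SimpleGraph V) [DecidableRel G.Adj] [DecidableRel H.Adj]
    (lam mu : Fin (Fintype.card V) → ℝ) (hlam : Monotone lam) (hmu : Monotone mu)
    (hlamG : (G.lapMatrix ℝ).charpoly.roots =
      (Finset.univ.val : Multiset (Fin (Fintype.card V))).map lam)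
    (hmuH : (H.lapMatrix ℝ).charpoly.roots =
      (Finset.univ.val : Multiset (Fin (Fintype.card V))).map mu) :
    ∑ j, |lam j - mu j| ≤ 4 * (symmDiff G.edgeFinset H.edgeFinset).card := by
  have hK := (G ⊓ H).isHermitian_lapMatrix ℝ
  obtain ⟨ν, hν, hνK⟩ := hK.exists_monotone_roots_charpoly_eq
  have hνlam : ν ≤ lam := hK.le_of_roots_charpoly_eq (G.isHermitian_lapMatrix ℝ)
    (posSemidef_lapMatrix_sub_of_le ℝ inf_le_left) hν hlam hνK hlamG
  have hνmu : ν ≤ mu := hK.le_of_roots_charpoly_eq (H.isHermitian_lapMatrix ℝ)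
    (posSemidef_lapMatrix_sub_of_le ℝ inf_le_right) hν hmu hνK hmuH
  have hsum {F : SimpleGraph V} [DecidableRel F.Adj] {f : Fin (Fintype.card V) → ℝ}
      (hf : (F.lapMatrix ℝ).charpoly.roots = (univ.val : Multiset _).map f) :
      ∑ j, f j = 2 * #F.edgeFinset :=
    (trace_eq_sum_of_roots_charpoly_eq hf).symm.trans (F.trace_lapMatrix ℝ)
  have hcard : (#(symmDiff G.edgeFinset H.edgeFinset) : ℝ) +
      2 * #(G.edgeFinset ∩ H.edgeFinset) = #G.edgeFinset + #H.edgeFinset := by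
    exact_mod_cast card_symmDiff_add_two_mul_card_inter _ _
  calc ∑ j, |lam j - mu j| ≤ ∑ j, ((lam j - ν j) + (mu j - ν j)) :=
        sum_le_sum fun j _ => abs_sub_le_iff.mpr ⟨by linarith [hνmu j], by linarith [hνlam j]⟩
    _ = ∑ j, lam j + ∑ j, mu j - 2 * ∑ j, ν j := by
        simp only [sum_add_distrib, sum_sub_distrib]; ring
    _ = 2 * #(symmDiff G.edgeFinset H.edgeFinset) := by
        rw [hsum hlamG, hsum hmuH, hsum hνK]
        simp only [edgeFinset_inf]
        linarith
    _ ≤ 4 * #(symmDiff G.edgeFinset H.edgeFinset) := by gcongr; norm_num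
end

section
/- Let G be a finite abstract simplicial complex and G₁ its Barycentric refinement. Then for every k ≥ 0, the number f_k(G₁) of simplices of G₁ of cardinality k+1 (that is, the number of chains x₀ ⊊ x₁ ⊊ … ⊊ x_k of elements of G) equals Σ_{x ∈ G} (number of surjective functions from x onto a fixed (k+1)-element set). Equivalently, f_k(G₁) = Σ_j (k+1)! · S(j+1, k+1) · f_j(G), where S denotes Stirling numbers of the second kind. -/
open Classical in
/-- The Barycentric refinement of a finite abstract simplicial complex `G` (given as a
finite set of finsets): its simplices are the nonempty chains in `(G, ⊊)`. -/
noncomputable def baryRefine {V : Type*} (G : Finset (Finset V)) :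
    Finset (Finset (Finset V)) :=
  G.powerset.filter fun c => c.Nonempty ∧
    (↑c : Set (Finset V)).Pairwise fun x y => x ⊂ y ∨ y ⊂ x

open Classical in
/-- The `f`-vector: `fVec G k` is the number of simplices of `G` of cardinality `k+1`. -/
noncomputable def fVec {α : Type*} (G : Finset (Finset α)) (k : ℕ) : ℕ :=
  (G.filter fun x => x.card = k + 1).card

/-- Stirling numbers of the second kind. -/
def stirling2 : ℕ → ℕ → ℕ
  | 0, 0 => 1
  | 0, _ + 1 => 0
  | _ + 1, 0 => 0
  | n + 1, k + 1 => (k + 1) * stirling2 n (k + 1) + stirling2 n k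

/-!
A chain `x₀ ⊊ ⋯ ⊊ x_k` with top `x` is the same as a surjection `f : x → Fin (k + 1)`: send
`v` to the number of `xᵢ` missing `v`, and conversely take `xᵢ = f⁻¹ {0, …, i}`. Classifying
surjections from an `(n + 1)`-set onto a `(k + 1)`-set by the image of one point gives the
recursion of `(k + 1)! S(n, k + 1)`.
-/

open Finset Function
open scoped Nat

section Surjections

variable {α α' β : Type*}

lemma natCard_surjective_congr_left (e : α ≃ α') :
    Nat.card {f : α → β // Surjective f} = Nat.card {f : α' → β // Surjective f} :=
  Nat.card_congr <| (e.arrowCongr (Equiv.refl β)).subtypeEquiv fun f =>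
    (e.symm.surjective_comp f).symm

lemma surjective_cons_iff {n : ℕ} {a : β} {g : Fin n → β} :
    Surjective (Fin.cons a g : Fin (n + 1) → β) ↔ ∀ b ≠ a, b ∈ Set.range g := by
  simp only [← Set.range_eq_univ, Fin.range_cons, Set.eq_univ_iff_forall, Set.mem_insert_iff]
  exact forall_congr' fun b => or_iff_not_imp_left

def avoidingEquiv (a : β) :
    {g : α → β // (∀ b ≠ a, b ∈ Set.range g) ∧ a ∉ Set.range g} ≃
      {g : α → {b // b ≠ a} // Surjective g} where
  toFun g := ⟨fun i => ⟨g.1 i, fun h => g.2.2 ⟨i, h⟩⟩, fun b => by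
    obtain ⟨i, hi⟩ := g.2.1 b b.2
    exact ⟨i, Subtype.ext hi⟩⟩
  invFun g := ⟨fun i => g.1 i, fun b hb => by
    obtain ⟨i, hi⟩ := g.2 ⟨b, hb⟩
    exact ⟨i, congrArg Subtype.val hi⟩, by rintro ⟨i, hi⟩; exact (g.1 i).2 hi⟩
  left_inv _ := rfl
  right_inv _ := rfl

lemma natCard_surjective_fin_succ [Fintype β] (n : ℕ) :
    Nat.card {f : Fin (n + 1) → β // Surjective f} =
      ∑ a : β, (Nat.card {g : Fin n → β // Surjective g} +
        Nat.card {g : Fin n → {b // b ≠ a} // Surjective g}) := by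
  classical
  have split (a : β) : Nat.card {g : Fin n → β // ∀ b ≠ a, b ∈ Set.range g} =
      Nat.card {g : Fin n → β // Surjective g} +
        Nat.card {g : Fin n → {b // b ≠ a} // Surjective g} := by
    rw [← Nat.card_congr (avoidingEquiv a), ← Nat.card_sum]
    let P (g : Fin n → β) : Prop := ∀ b ≠ a, b ∈ Set.range g
    refine Nat.card_congr ((Equiv.sumCompl fun g : Subtype P => a ∈ Set.range g.1).symm.trans
      (Equiv.sumCongr ?_ (Equiv.subtypeSubtypeEquivSubtypeInter P (a ∉ Set.range ·))))
    refine (Equiv.subtypeSubtypeEquivSubtypeInter P (a ∈ Set.range ·)).trans <|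
      Equiv.subtypeEquivRight fun g => ⟨?_, fun h => ⟨fun b _ => h b, h a⟩⟩
    rintro ⟨h, ha⟩ b
    obtain rfl | hb := eq_or_ne b a
    exacts [ha, h b hb]
  calc Nat.card {f : Fin (n + 1) → β // Surjective f}
      = Nat.card (Σ a : β, {g : Fin n → β // ∀ b ≠ a, b ∈ Set.range g}) :=
        Nat.card_congr <| ((Fin.consEquiv fun _ => β).subtypeEquiv fun p =>
          surjective_cons_iff.symm).symm.trans
          (Equiv.subtypeProdEquivSigmaSubtype fun a g => ∀ b ≠ a, b ∈ Set.range g)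
    _ = _ := by rw [Nat.card_sigma]; simp only [split]

theorem natCard_surjective_fin (n : ℕ) (β : Type*) [Finite β] :
    Nat.card {f : Fin n → β // Surjective f} = (Nat.card β)! * stirling2 n (Nat.card β) := by
  classical
  have := Fintype.ofFinite β
  induction n generalizing β with
  | zero =>
    rcases isEmpty_or_nonempty β with hβ | ⟨⟨b⟩⟩
    · have : Unique {f : Fin 0 → β // Surjective f} :=
        ⟨⟨⟨finZeroElim, hβ.elim⟩⟩, fun f => Subtype.ext (funext finZeroElim)⟩
      simp [stirling2]
    · have : IsEmpty {f : Fin 0 → β // Surjective f} := ⟨fun f => (f.2 b).elim finZeroElim⟩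
      obtain ⟨m, hm⟩ := Nat.exists_eq_succ_of_ne_zero (Nat.card_ne_zero.2 ⟨⟨b⟩, ‹_›⟩)
      rw [Nat.card_of_isEmpty, hm, stirling2, Nat.mul_zero]
  | succ n ih =>
    have hne (a : β) : Nat.card {b // b ≠ a} = Nat.card β - 1 := by
      simp only [Nat.card_eq_fintype_card]; exact Set.card_ne_eq a
    simp only [natCard_surjective_fin_succ, ih, hne, sum_const, Finset.card_univ, smul_eq_mul]
    rw [← Nat.card_eq_fintype_card]
    rcases Nat.card β with _ | m
    · simp [stirling2]
    · simp only [stirling2, Nat.add_sub_cancel, Nat.factorial_succ]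
      ring

theorem natCard_surjective (α β : Type*) [Finite α] [Finite β] :
    Nat.card {f : α → β // Surjective f} = (Nat.card β)! * stirling2 (Nat.card α) (Nat.card β) := by
  have := Fintype.ofFinite α
  rw [natCard_surjective_congr_left (Fintype.equivFin α), natCard_surjective_fin,
    Nat.card_eq_fintype_card (α := α)]

end Surjections

lemma IsChain.supClosed {α : Type*} [SemilatticeSup α] {s : Set α} (hs : IsChain (· ≤ ·) s) :
    SupClosed s := by
  intro a ha b hb
  rcases hs.total ha hb with h | h
  · rwa [sup_eq_right.2 h]
  · rwa [sup_eq_left.2 h]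

section Sublevel

variable {V ι : Type*} {x : Finset V}

def sublevelSet [Preorder ι] [DecidableLE ι] (x : Finset V) (f : {v // v ∈ x} → ι) (i : ι) :
    Finset V :=
  (univ.filter (f · ≤ i)).map (Embedding.subtype _)

variable [Preorder ι] [DecidableLE ι] {f : {v // v ∈ x} → ι}

lemma mem_sublevelSet {v : V} (hv : v ∈ x) {i : ι} : v ∈ sublevelSet x f i ↔ f ⟨v, hv⟩ ≤ i := by
  simp [sublevelSet, hv]

lemma sublevelSet_subset (i : ι) : sublevelSet x f i ⊆ x := by
  intro v hv
  simp only [sublevelSet, mem_map, mem_filter, Embedding.subtype_apply] at hv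
  obtain ⟨w, -, rfl⟩ := hv
  exact w.2

lemma sublevelSet_mono : Monotone (sublevelSet x f) := by
  intro i j hij v hv
  have hvx := sublevelSet_subset i hv
  rw [mem_sublevelSet hvx] at hv ⊢
  exact hv.trans hij

lemma sublevelSet_top [OrderTop ι] : sublevelSet x f ⊤ = x :=
  (sublevelSet_subset _).antisymm fun _ hv => (mem_sublevelSet hv).2 le_top

lemma card_filter_notMem_sublevelSet [DecidableEq V] {n : ℕ} {f : {v // v ∈ x} → Fin n} {v : V}
    (hv : v ∈ x) :
    #{i | v ∉ sublevelSet x f i} = f ⟨v, hv⟩ := by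
  have : ({i | v ∉ sublevelSet x f i} : Finset (Fin n)) = Iio (f ⟨v, hv⟩) := by
    ext i; simp [mem_sublevelSet hv]
  rw [this, Fin.card_Iio]

lemma strictMono_sublevelSet_iff {k : ℕ} {f : {v // v ∈ x} → Fin (k + 1)} :
    StrictMono (sublevelSet x f) ∧ (sublevelSet x f 0).Nonempty ↔ Surjective f := by
  constructor
  · rintro ⟨hmono, ⟨v, hv⟩⟩ j
    induction j using Fin.cases with
    | zero =>
      have hvx := sublevelSet_subset 0 hv
      exact ⟨⟨v, hvx⟩, Fin.le_zero_iff.1 ((mem_sublevelSet hvx).1 hv)⟩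
    | succ i =>
      obtain ⟨v, hv, hvi⟩ := Finset.exists_of_ssubset (hmono (Fin.castSucc_lt_succ (i := i)))
      have hvx := sublevelSet_subset _ hv
      rw [mem_sublevelSet hvx] at hv hvi
      exact ⟨⟨v, hvx⟩, le_antisymm hv (Fin.castSucc_lt_iff_succ_le.1 (not_le.1 hvi))⟩
  · intro hf
    refine ⟨fun i j hij => ssubset_of_subset_not_subset (sublevelSet_mono hij.le) fun h => ?_, ?_⟩
    · obtain ⟨⟨v, hv⟩, hvj⟩ := hf j
      have := (mem_sublevelSet hv).1 (h ((mem_sublevelSet hv).2 hvj.le))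
      exact absurd (hvj ▸ this) (not_le.2 hij)
    · obtain ⟨⟨v, hv⟩, hv0⟩ := hf 0
      exact ⟨v, (mem_sublevelSet hv).2 hv0.le⟩

end Sublevel

lemma Finset.sigma_mk_eq {α β : Type*} {s t : Finset α} (h : s = t) {F : {v // v ∈ s} → β}
    {f : {v // v ∈ t} → β} (hF : ∀ v (hv : v ∈ s), F ⟨v, hv⟩ = f ⟨v, h ▸ hv⟩) :
    (⟨s, F⟩ : Σ u : Finset α, {v // v ∈ u} → β) = ⟨t, f⟩ := by
  subst h
  exact congrArg _ (funext fun v => hF v v.2)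

section Chains

variable {V : Type*} [DecidableEq V] {c : Finset (Finset V)}

def chainLevel (c : Finset (Finset V)) (v : V) : ℕ := #{y ∈ c | v ∉ y}

def chainRank (c : Finset (Finset V)) (y : Finset V) : ℕ := #{z ∈ c | z ⊂ y}

lemma chainLevel_lt_card {v : V} (hv : v ∈ c.sup id) : chainLevel c v < #c := by
  obtain ⟨y, hy, hvy⟩ := mem_sup.1 hv
  exact card_lt_card (filter_ssubset.2 ⟨y, hy, not_not.2 hvy⟩)

lemma chainRank_lt_card {y : Finset V} (hy : y ∈ c) : chainRank c y < #c :=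
  card_lt_card (filter_ssubset.2 ⟨y, hy, ssubset_irrefl y⟩)

lemma chainLevel_le_chainRank_iff (hc : IsChain (· ⊂ ·) (c : Set (Finset V))) {y : Finset V}
    (hy : y ∈ c) {v : V} : chainLevel c v ≤ chainRank c y ↔ v ∈ y := by
  constructor
  · intro h
    by_contra hvy
    refine h.not_gt (card_lt_card ⟨fun z hz => ?_, fun hsub => ?_⟩)
    · simp only [mem_filter] at hz ⊢
      exact ⟨hz.1, fun hvz => hvy (hz.2.subset hvz)⟩
    · exact ssubset_irrefl y (mem_filter.1 (hsub (mem_filter.2 ⟨hy, hvy⟩))).2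
  · intro hvy
    refine card_le_card fun z hz => ?_
    simp only [mem_filter] at hz ⊢
    have hzy : z ≠ y := by rintro rfl; exact hz.2 hvy
    exact ⟨hz.1, (hc hz.1 hy hzy).resolve_right fun hyz => hz.2 (hyz.subset hvy)⟩

end Chains

lemma mem_baryRefine {V : Type*} {G : Finset (Finset V)} {c : Finset (Finset V)} :
    c ∈ baryRefine G ↔ c ⊆ G ∧ c.Nonempty ∧ IsChain (· ⊂ ·) (c : Set (Finset V)) := by
  simp only [baryRefine, mem_filter, mem_powerset, IsChain]

section Barycentric

variable {V : Type*} [DecidableEq V] {G : Finset (Finset V)} {k : ℕ}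

def sublevelChain (x : Finset V) (f : {v // v ∈ x} → Fin (k + 1)) : Finset (Finset V) :=
  univ.image (sublevelSet x f)

def chainLevelFin (c : Finset (Finset V)) (hc : #c = k + 1) :
    {v // v ∈ c.sup id} → Fin (k + 1) :=
  fun v => ⟨chainLevel c v, hc ▸ chainLevel_lt_card v.2⟩

section
variable {x : Finset V} {f : {v // v ∈ x} → Fin (k + 1)}

lemma isChain_sublevelChain : IsChain (· ⊂ ·) (sublevelChain x f : Set (Finset V)) := by
  rw [sublevelChain, coe_image, coe_univ, Set.image_univ]
  exact sublevelSet_mono.isChain_range.lt_of_le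

lemma sup_sublevelChain : (sublevelChain x f).sup id = x :=
  (Finset.sup_le fun y hy => by
    obtain ⟨i, -, rfl⟩ := mem_image.1 hy
    exact sublevelSet_subset i).antisymm
  (le_sup (f := id) (mem_image.2 ⟨⊤, mem_univ _, sublevelSet_top⟩))

lemma card_sublevelChain (hf : Surjective f) : #(sublevelChain x f) = k + 1 := by
  rw [sublevelChain, card_image_of_injective _ (strictMono_sublevelSet_iff.2 hf).1.injective,
    card_univ, Fintype.card_fin]

lemma sublevelChain_subset (hf : Surjective f) (hx : x ∈ G)
    (hdown : ∀ x ∈ G, ∀ y ⊆ x, y.Nonempty → y ∈ G) : sublevelChain x f ⊆ G := by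
  intro y hy
  obtain ⟨i, -, rfl⟩ := mem_image.1 hy
  exact hdown x hx _ (sublevelSet_subset i)
    ((strictMono_sublevelSet_iff.2 hf).2.mono (sublevelSet_mono (Fin.zero_le i)))

lemma chainLevel_sublevelChain (hf : Surjective f) {v : V} (hv : v ∈ x) :
    chainLevel (sublevelChain x f) v = f ⟨v, hv⟩ := by
  rw [chainLevel, sublevelChain, filter_image,
    card_image_of_injective _ (strictMono_sublevelSet_iff.2 hf).1.injective,
    card_filter_notMem_sublevelSet hv]

end

lemma sublevelChain_chainLevelFin {c : Finset (Finset V)}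
    (hc : IsChain (· ⊂ ·) (c : Set (Finset V))) (hcard : #c = k + 1) :
    sublevelChain (c.sup id) (chainLevelFin c hcard) = c := by
  symm
  refine eq_of_subset_of_card_le (fun y hy => mem_image.2
    ⟨⟨chainRank c y, hcard ▸ chainRank_lt_card hy⟩, mem_univ _, ?_⟩) ?_
  · ext v
    by_cases hv : v ∈ c.sup id
    · exact (mem_sublevelSet hv).trans (chainLevel_le_chainRank_iff hc hy)
    · exact iff_of_false (fun h => hv (sublevelSet_subset _ h))
        fun h => hv (le_sup (f := id) hy h)
  · exact card_image_le.trans (by rw [card_univ, Fintype.card_fin, hcard])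

lemma surjective_chainLevelFin {c : Finset (Finset V)}
    (hc : IsChain (· ⊂ ·) (c : Set (Finset V))) (hcard : #c = k + 1)
    (hne : ∀ y ∈ c, y.Nonempty) : Surjective (chainLevelFin c hcard) := by
  have hchain := sublevelChain_chainLevelFin hc hcard
  refine strictMono_sublevelSet_iff.1 ⟨sublevelSet_mono.strictMono_of_injective ?_, hne _ ?_⟩
  · rw [← Set.injOn_univ, ← coe_univ, ← card_image_iff, ← sublevelChain, hchain, hcard,
      card_univ, Fintype.card_fin]
  · exact hchain.le (mem_image_of_mem _ (mem_univ 0))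

end Barycentric

theorem fVec_baryRefine_eq_sum_card_surjective {V : Type*} [DecidableEq V]
    {G : Finset (Finset V)} (hne : ∀ x ∈ G, x.Nonempty)
    (hdown : ∀ x ∈ G, ∀ y ⊆ x, y.Nonempty → y ∈ G) (k : ℕ) :
    fVec (baryRefine G) k =
      ∑ x ∈ G, Nat.card {f : {v // v ∈ x} → Fin (k + 1) // Surjective f} := by
  simp only [fVec, Nat.card_eq_fintype_card, Fintype.card_subtype]
  rw [← card_sigma]
  refine card_bij' (fun c hc => ⟨c.sup id, chainLevelFin c (mem_filter.1 hc).2⟩)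
    (fun p _ => sublevelChain p.1 p.2) ?_ ?_ ?_ ?_
  · intro c hc
    obtain ⟨hc, hcard⟩ := mem_filter.1 hc
    obtain ⟨hcG, hcne, hchain⟩ := mem_baryRefine.1 hc
    have htop : c.sup id ∈ c :=
      (hchain.mono_rel fun _ _ h => h.le).supClosed.finsetSup_mem hcne fun _ hy => hy
    exact mem_sigma.2 ⟨hcG htop, mem_filter.2 ⟨mem_univ _,
      surjective_chainLevelFin hchain hcard fun y hy => hne y (hcG hy)⟩⟩
  · rintro ⟨x, f⟩ hp
    obtain ⟨hx, hf⟩ := mem_sigma.1 hp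
    have hf : Surjective f := (mem_filter.1 hf).2
    exact mem_filter.2 ⟨mem_baryRefine.2 ⟨sublevelChain_subset hf hx hdown,
      univ_nonempty.image _, isChain_sublevelChain⟩, card_sublevelChain hf⟩
  · intro c hc
    obtain ⟨hc, hcard⟩ := mem_filter.1 hc
    exact sublevelChain_chainLevelFin (mem_baryRefine.1 hc).2.2 hcard
  · rintro ⟨x, f⟩ hp
    have hf : Surjective f := (mem_filter.1 (mem_sigma.1 hp).2).2
    exact Finset.sigma_mk_eq sup_sublevelChain fun v hv =>
      Fin.ext (chainLevel_sublevelChain hf (sup_sublevelChain.le hv))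

theorem sum_card_eq_sum_fVec_smul {α M : Type*} [AddCommMonoid M] {G : Finset (Finset α)}
    (hne : ∀ x ∈ G, x.Nonempty) {m : ℕ} (hm : ∀ x ∈ G, #x ≤ m) (F : ℕ → M) :
    ∑ x ∈ G, F #x = ∑ j ∈ range m, fVec G j • F (j + 1) := by
  classical
  have hmaps : ∀ x ∈ G, #x - 1 ∈ range m := fun x hx => mem_range.2 (by
    have := (hne x hx).card_pos; have := hm x hx; omega)
  rw [← sum_fiberwise_of_maps_to hmaps]
  refine sum_congr rfl fun j _ => ?_
  have hfiber : {x ∈ G | #x - 1 = j} = {x ∈ G | #x = j + 1} :=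
    filter_congr fun x hx => by have := (hne x hx).card_pos; omega
  rw [hfiber, sum_congr rfl fun x hx => congrArg F (mem_filter.1 hx).2, sum_const, fVec]

/-- The number of `(k+1)`-element chains of a finite abstract simplicial complex `G`
(simplices of cardinality `k+1` of the Barycentric refinement) equals the total number
of surjections of simplices of `G` onto a fixed `(k+1)`-element set; equivalently it is
`Σ_j (k+1)! S(j+1, k+1) f_j(G)` with Stirling numbers `S` of the second kind. -/
theorem fvec_barycentric {V : Type*} [DecidableEq V] (G : Finset (Finset V))
    (hne : ∀ x ∈ G, x.Nonempty)
    (hdown : ∀ x ∈ G, ∀ y ⊆ x, y.Nonempty → y ∈ G) (k : ℕ) :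
    (fVec (baryRefine G) k =
      ∑ x ∈ G, Nat.card {f : {v : V // v ∈ x} → Fin (k + 1) // Function.Surjective f}) ∧
    (∀ m : ℕ, (∀ x ∈ G, x.card ≤ m) →
      fVec (baryRefine G) k =
        ∑ j ∈ Finset.range m, (k + 1).factorial * stirling2 (j + 1) (k + 1) * fVec G j) := by
  have hchains := fVec_baryRefine_eq_sum_card_surjective hne hdown k
  refine ⟨hchains, fun m hm => ?_⟩
  have hsurj (x : Finset V) : Nat.card {f : {v // v ∈ x} → Fin (k + 1) // Surjective f} =
      (k + 1)! * stirling2 #x (k + 1) := by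
    rw [natCard_surjective, Nat.card_fin, Nat.card_eq_finsetCard]
  rw [hchains, sum_congr rfl fun x _ => hsurj x,
    sum_card_eq_sum_fVec_smul hne hm fun n => (k + 1)! * stirling2 n (k + 1)]
  exact sum_congr rfl fun j _ => by rw [smul_eq_mul, mul_comm]
end

section
/- Let G be a finite simple graph that is an m-manifold, let k ≤ m, and let f : V(G) → {0, 1, …, k} be any function. Let G_f be the finite simple graph whose vertices are the nonempty cliques x of G on which f attains all k+1 values (i.e. f(x) = {0,…,k}), with two such cliques adjacent if and only if one is strictly contained in the other. Then G_f is either the empty graph or an (m−k)-manifold. -/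
/-!
Every graph here is the comparability graph of a family of finite sets ordered by `⊂`, and in such
a graph the unit sphere of `z` is the join of the part below `z` with the part above it. For a
clique `z` of `G_f`, the part below consists of the proper subsets of `z` on which `f` is still
surjective, and the part above is the barycentric refinement of the common neighbourhood of `z`,
which in the `m`-manifold `G` is an `(m - |z|)`-sphere. As the join of a `p`-sphere and a
`q`-sphere is a `(p + q + 1)`-sphere, it remains to see that:

* the proper subsets of `z` on which `f` is surjective form a `(|z| - k - 2)`-sphere. Their links
  are joins of smaller such complexes with boundaries of simplices (the case of a constant `f`).
  For a repeated value `f a = f b`, deleting `z \ {b}` leaves a contractible graph: remove the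
  faces containing `a` in order of size; the link of each is then either a cone over that face
  with `a` removed, or a punctured boundary of a smaller simplex;
* barycentric refinement preserves contractibility and spheres, by peeling off the cliques
  containing a vertex in the same way.
-/

universe u

/-- The unit sphere of a vertex: the subgraph induced on the neighbors of `v`. -/
def SimpleGraph.unitSphere {V : Type u} (G : SimpleGraph V) (v : V) :
    SimpleGraph {u : V // G.Adj v u} :=
  SimpleGraph.induce {u : V | G.Adj v u} G

/-- The graph obtained by deleting the vertex `v`. -/
def SimpleGraph.deleteVert {V : Type u} (G : SimpleGraph V) (v : V) :
    SimpleGraph {u : V // u ≠ v} :=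
  SimpleGraph.induce {u : V | u ≠ v} G

/-- Inductive notion of contractibility for graphs: the one-vertex graph is
contractible, and `G` is contractible if for some vertex `v` both the unit sphere
`S(v)` and the deletion `G ∖ v` are contractible. -/
inductive GraphContractible : ∀ {V : Type u}, SimpleGraph V → Prop
  | single {V : Type u} (G : SimpleGraph V) (h1 : Nonempty V) (h2 : Subsingleton V) :
      GraphContractible G
  | step {V : Type u} (G : SimpleGraph V) (v : V)
      (hS : GraphContractible (G.unitSphere v))
      (hD : GraphContractible (G.deleteVert v)) : GraphContractible G

/-- Inductive notion of a `q`-sphere: the empty graph is the `(-1)`-sphere, and for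
`q ≥ 0` a graph is a `q`-sphere if every unit sphere is a `(q-1)`-sphere and deleting
some vertex leaves a contractible graph. -/
inductive GraphSphere : ℤ → ∀ {V : Type u}, SimpleGraph V → Prop
  | empty {V : Type u} (G : SimpleGraph V) (h : IsEmpty V) : GraphSphere (-1) G
  | succ {V : Type u} (G : SimpleGraph V) (q : ℤ) (hq : 0 ≤ q)
      (hS : ∀ v : V, GraphSphere (q - 1) (G.unitSphere v))
      (hv : ∃ v : V, GraphContractible (G.deleteVert v)) : GraphSphere q G

/-- A graph is a `q`-manifold if every unit sphere is a `(q-1)`-sphere. -/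
def IsGraphManifold (q : ℤ) {V : Type u} (G : SimpleGraph V) : Prop :=
  ∀ v : V, GraphSphere (q - 1) (G.unitSphere v)

/-- The join of two graphs: keep all edges and connect every vertex of `G` to every
vertex of `H`. -/
def graphJoin {V W : Type u} (G : SimpleGraph V) (H : SimpleGraph W) :
    SimpleGraph (V ⊕ W) where
  Adj x y := match x, y with
    | Sum.inl a, Sum.inl b => G.Adj a b
    | Sum.inr a, Sum.inr b => H.Adj a b
    | Sum.inl _, Sum.inr _ => True
    | Sum.inr _, Sum.inl _ => True
  symm := ⟨by rintro (a | a) (b | b) h <;> simp_all [SimpleGraph.adj_comm]⟩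
  loopless := ⟨by rintro (a | a) h <;> exact SimpleGraph.irrefl _ h⟩

open Classical in
/-- `f_k(G)`: the number of cliques of `G` with exactly `k+1` vertices. -/
noncomputable def graphFVec {V : Type u} [Fintype V] (G : SimpleGraph V) (k : ℕ) : ℕ :=
  (Finset.univ.filter fun x : Finset V => x.card = k + 1 ∧ G.IsClique (↑x : Set V)).card

/-- The Euler characteristic `χ(G) = Σ_k (-1)^k f_k(G)`. -/
noncomputable def graphEulerChar {V : Type u} [Fintype V] (G : SimpleGraph V) : ℤ :=
  ∑ k ∈ Finset.range (Fintype.card V + 1), (-1 : ℤ) ^ k * graphFVec G k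

open Classical in
/-- The curvature of a vertex: `K(v) = Σ_{x ∋ v} (-1)^(|x|-1)/|x|`, summing over the
cliques of `G` containing `v`. -/
noncomputable def graphCurvature {V : Type u} [Fintype V] (G : SimpleGraph V) (v : V) : ℚ :=
  ∑ x ∈ Finset.univ.filter
      (fun x : Finset V => x.Nonempty ∧ G.IsClique (↑x : Set V) ∧ v ∈ x),
    (-1 : ℚ) ^ (x.card - 1) / (x.card : ℚ)

open SimpleGraph

universe v

section Isomorphism

variable {V W : Type u} {G : SimpleGraph V} {H : SimpleGraph W}

def SimpleGraph.Iso.unitSphere (φ : G ≃g H) (v : V) : G.unitSphere v ≃g H.unitSphere (φ v) where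
  toEquiv := φ.toEquiv.subtypeEquiv fun _ => φ.map_adj_iff.symm
  map_rel_iff' := φ.map_adj_iff

def SimpleGraph.Iso.deleteVert (φ : G ≃g H) (v : V) : G.deleteVert v ≃g H.deleteVert (φ v) where
  toEquiv := φ.toEquiv.subtypeEquiv fun _ => φ.injective.ne_iff.symm
  map_rel_iff' := φ.map_adj_iff

theorem GraphContractible.of_iso (h : GraphContractible G) (φ : G ≃g H) :
    GraphContractible H := by
  induction h generalizing W with
  | single G hne hsub => exact .single H (hne.map φ) φ.toEquiv.symm.subsingleton
  | step G v _ _ ihS ihD => exact .step H (φ v) (ihS (φ.unitSphere v)) (ihD (φ.deleteVert v))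

theorem GraphSphere.of_iso {q : ℤ} (h : GraphSphere q G) (φ : G ≃g H) : GraphSphere q H := by
  induction h generalizing W with
  | empty G hE => exact .empty H φ.toEquiv.symm.isEmpty
  | succ G q hq _ hv ih =>
    refine .succ H q hq (fun w => ?_) ?_
    · have := ih (φ.symm w) (φ.unitSphere (φ.symm w))
      rwa [RelIso.apply_symm_apply] at this
    · obtain ⟨v, hv⟩ := hv
      exact ⟨φ v, hv.of_iso (φ.deleteVert v)⟩

end Isomorphism

section Basic

variable {V : Type u} {G : SimpleGraph V}

theorem GraphSphere.isGraphManifold {q : ℤ} (h : GraphSphere q G) : IsGraphManifold q G := by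
  cases h with
  | empty G hE => exact fun v => hE.elim v
  | succ G q _ hS _ => exact hS

theorem GraphContractible.of_forall_adj [Finite V] (d : V) (hd : ∀ w, w ≠ d → G.Adj d w) :
    GraphContractible G := by
  induction h : Nat.card V using Nat.strong_induction_on generalizing V with
  | _ n ih =>
  by_cases hsub : Subsingleton V
  · exact .single G ⟨d⟩ hsub
  obtain ⟨w, hw⟩ : ∃ w, w ≠ d := by
    by_contra! hall
    exact hsub ⟨fun a b => (hall a).trans (hall b).symm⟩
  refine .step G w (ih _ ?_ ⟨d, (hd w hw).symm⟩ ?_ rfl) (ih _ ?_ ⟨d, hw.symm⟩ ?_ rfl)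
  · exact h ▸ Finite.card_subtype_lt (x := w) (G.loopless.irrefl w)
  · exact fun u hu => hd u.1 fun h => hu (Subtype.ext h)
  · exact h ▸ Finite.card_subtype_lt (x := w) (by simp)
  · exact fun u hu => hd u.1 fun h => hu (Subtype.ext h)

end Basic

namespace graphJoin

variable {V W : Type u} (A : SimpleGraph V) (B : SimpleGraph W)

def unitSphereInl (a : V) :
    (graphJoin A B).unitSphere (.inl a) ≃g graphJoin (A.unitSphere a) B where
  toFun
    | ⟨.inl b, h⟩ => .inl ⟨b, h⟩
    | ⟨.inr w, _⟩ => .inr w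
  invFun
    | .inl ⟨b, h⟩ => ⟨.inl b, h⟩
    | .inr w => ⟨.inr w, trivial⟩
  left_inv := by rintro ⟨b | w, h⟩ <;> rfl
  right_inv := by rintro (⟨b, h⟩ | w) <;> rfl
  map_rel_iff' := by rintro ⟨b | w, h⟩ ⟨b' | w', h'⟩ <;> exact Iff.rfl

def unitSphereInr (w : W) :
    (graphJoin A B).unitSphere (.inr w) ≃g graphJoin A (B.unitSphere w) where
  toFun
    | ⟨.inl a, _⟩ => .inl a
    | ⟨.inr b, h⟩ => .inr ⟨b, h⟩
  invFun
    | .inl a => ⟨.inl a, trivial⟩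
    | .inr ⟨b, h⟩ => ⟨.inr b, h⟩
  left_inv := by rintro ⟨a | b, h⟩ <;> rfl
  right_inv := by rintro (a | ⟨b, h⟩) <;> rfl
  map_rel_iff' := by rintro ⟨a | b, h⟩ ⟨a' | b', h'⟩ <;> exact Iff.rfl

def deleteVertInl (a : V) :
    (graphJoin A B).deleteVert (.inl a) ≃g graphJoin (A.deleteVert a) B where
  toFun
    | ⟨.inl b, h⟩ => .inl ⟨b, fun hb => h (congrArg _ hb)⟩
    | ⟨.inr w, _⟩ => .inr w
  invFun
    | .inl ⟨b, h⟩ => ⟨.inl b, fun hb => h (Sum.inl_injective hb)⟩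
    | .inr w => ⟨.inr w, Sum.inr_ne_inl⟩
  left_inv := by rintro ⟨b | w, h⟩ <;> rfl
  right_inv := by rintro (⟨b, h⟩ | w) <;> rfl
  map_rel_iff' := by rintro ⟨b | w, h⟩ ⟨b' | w', h'⟩ <;> exact Iff.rfl

def isoOfIsEmptyRight [IsEmpty W] : graphJoin A B ≃g A where
  toEquiv := Equiv.sumEmpty V W
  map_rel_iff' := by rintro (a | w) (b | w') <;> first | exact Iff.rfl | exact isEmptyElim ‹W›

def isoOfIsEmptyLeft [IsEmpty V] : graphJoin A B ≃g B where
  toEquiv := Equiv.emptySum V W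
  map_rel_iff' := by rintro (a | w) (b | w') <;> first | exact Iff.rfl | exact isEmptyElim ‹V›

end graphJoin

section Join

variable {V W : Type u}

theorem GraphContractible.graphJoin_left {A : SimpleGraph V} (hA : GraphContractible A)
    [Finite W] (B : SimpleGraph W) : GraphContractible (graphJoin A B) := by
  induction hA with
  | @single V A hne hsub =>
    obtain ⟨a⟩ := hne
    have : Finite V := Finite.of_subsingleton
    refine .of_forall_adj (.inl a) ?_
    rintro (b | w) hne
    · exact absurd (congrArg Sum.inl (hsub.elim b a)) hne
    · trivial
  | step A v _ _ ihS ihD =>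
    exact .step _ (.inl v) (ihS.of_iso (graphJoin.unitSphereInl A B v).symm)
      (ihD.of_iso (graphJoin.deleteVertInl A B v).symm)

theorem GraphSphere.graphJoin {p q : ℤ} {A : SimpleGraph V} {B : SimpleGraph W} [Finite W]
    (hA : GraphSphere p A) (hB : GraphSphere q B) : GraphSphere (p + q + 1) (graphJoin A B) := by
  revert ‹Finite W›
  induction hB generalizing p V with
  | empty B _ =>
    intro
    simpa using hA.of_iso (graphJoin.isoOfIsEmptyRight A B).symm
  | succ B q hq hSB hvB ihB =>
    intro
    induction hA with
    | empty A _ =>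
      simpa using (GraphSphere.succ B q hq hSB hvB).of_iso (graphJoin.isoOfIsEmptyLeft A B).symm
    | succ A p hp _ hvA ihA =>
      refine .succ _ _ (by omega) ?_ ?_
      · rintro (a | w)
        · have := (ihA a).of_iso (graphJoin.unitSphereInl A B a).symm
          rwa [show p - 1 + q + 1 = p + q + 1 - 1 by ring] at this
        · have := (ihB w (.succ A p hp ‹_› hvA)).of_iso (graphJoin.unitSphereInr A B w).symm
          rwa [show p + (q - 1) + 1 = p + q + 1 - 1 by ring] at this
      · obtain ⟨a, ha⟩ := hvA
        exact ⟨.inl a, (ha.graphJoin_left B).of_iso (graphJoin.deleteVertInl A B a).symm⟩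

end Join

section Induce

variable {V : Type u} (G : SimpleGraph V) (Q : Set V)

def SimpleGraph.induceUnitSphereIso (v : Q) :
    (G.induce Q).unitSphere v ≃g G.induce {u | u ∈ Q ∧ G.Adj v u} where
  toFun u := ⟨u.1.1, u.1.2, u.2⟩
  invFun u := ⟨⟨u.1, u.2.1⟩, u.2.2⟩
  left_inv _ := rfl
  right_inv _ := rfl
  map_rel_iff' := Iff.rfl

def SimpleGraph.induceDeleteVertIso (v : Q) :
    (G.induce Q).deleteVert v ≃g G.induce {u | u ∈ Q ∧ u ≠ v} where
  toFun u := ⟨u.1.1, u.1.2, fun h => u.2 (Subtype.ext h)⟩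
  invFun u := ⟨⟨u.1, u.2.1⟩, fun h => u.2.2 (congrArg Subtype.val h)⟩
  left_inv _ := rfl
  right_inv _ := rfl
  map_rel_iff' := Iff.rfl

end Induce

def comparabilityGraph (α : Type u) [Preorder α] : SimpleGraph α :=
  SimpleGraph.fromRel (· < ·)

local notation "Γ" S:max => SimpleGraph.induce S (comparabilityGraph _)

@[simp] theorem comparabilityGraph_adj {α : Type u} [Preorder α] {a b : α} :
    (comparabilityGraph α).Adj a b ↔ a < b ∨ b < a := by
  simp only [comparabilityGraph, fromRel_adj, and_iff_right_iff_imp]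
  rintro (h | h) rfl <;> exact lt_irrefl _ h

namespace comparabilityGraph

variable {α : Type u} [Preorder α]

theorem induce_eq_fromRel (S : Set α) : Γ S = SimpleGraph.fromRel fun p q : S => p.1 < q.1 := by
  ext p q
  simp only [comap_adj, Function.Embedding.subtype_apply, comparabilityGraph_adj, fromRel_adj,
    iff_and_self]
  rintro (h | h) rfl <;> exact lt_irrefl _ h

def induceIsoOfOrderIso {β : Type u} [Preorder β] {S : Set α} {T : Set β} (e : S ≃o T) :
    Γ S ≃g Γ T where
  toEquiv := e.toEquiv
  map_rel_iff' {a b} := by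
    simp only [comap_adj, Function.Embedding.subtype_apply, comparabilityGraph_adj,
      Subtype.coe_lt_coe]
    exact or_congr e.lt_iff_lt e.lt_iff_lt

noncomputable def induceUnionIso {A B C : Set α} (hC : C = A ∪ B)
    (hAB : ∀ a ∈ A, ∀ b ∈ B, a < b) : Γ C ≃g graphJoin (Γ A) (Γ B) := by
  classical
  subst hC
  have hd : Disjoint A B := Set.disjoint_left.2 fun a ha hb => lt_irrefl a (hAB a ha a hb)
  refine RelIso.symm { toEquiv := (Equiv.Set.union hd).symm, map_rel_iff' := ?_ }
  rintro (a | b) (a' | b')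
  · simp [Equiv.Set.union_symm_apply_left, graphJoin]
  · simp [Equiv.Set.union_symm_apply_left, Equiv.Set.union_symm_apply_right, graphJoin,
      hAB _ a.2 _ b'.2]
  · simp [Equiv.Set.union_symm_apply_left, Equiv.Set.union_symm_apply_right, graphJoin,
      hAB _ a'.2 _ b.2]
  · simp [Equiv.Set.union_symm_apply_right, graphJoin]

noncomputable def induceUnitSphereJoinIso (S : Set α) (p : S) :
    (Γ S).unitSphere p ≃g graphJoin (Γ {q ∈ S | q < p.1}) (Γ {q ∈ S | p.1 < q}) :=
  (induceUnitSphereIso _ S p).trans <| induceUnionIso (by ext; simp [and_or_left, or_comm])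
    fun _ ha _ hb => ha.2.trans hb.2

theorem graphContractible_induce_ne_of_orderIso {β : Type u} [Preorder β] {S : Set α}
    {T : Set β} (e : S ≃o T) (p : S) (h : GraphContractible (Γ {q ∈ T | q ≠ (e p).1})) :
    GraphContractible (Γ {q ∈ S | q ≠ p.1}) :=
  ((h.of_iso (induceDeleteVertIso _ T (e p)).symm).of_iso
    ((induceIsoOfOrderIso e).deleteVert p).symm).of_iso (induceDeleteVertIso _ S p)

theorem graphContractible_induce_of_comparable {S : Set α} (hS : S.Finite) {p : α} (hp : p ∈ S)
    (h : ∀ q ∈ S, q ≠ p → q < p ∨ p < q) : GraphContractible (Γ S) := by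
  have := hS.to_subtype
  refine .of_forall_adj ⟨p, hp⟩ fun q hq => ?_
  simpa [or_comm] using h q.1 q.2 fun h => hq (Subtype.ext h)

theorem graphContractible_induce_of_peel {S : Set α} (D : Finset α) (hDS : ↑D ⊆ S)
    (hcore : GraphContractible (Γ {q ∈ S | q ∉ D}))
    (hlink : ∀ d ∈ D, GraphContractible (Γ ({q ∈ S | q ∉ D ∧ q < d} ∪ {q ∈ S | d < q}))) :
    GraphContractible (Γ S) := by
  classical
  induction D using Finset.strongInduction generalizing S with
  | H D ih =>
  rcases D.eq_empty_or_nonempty with rfl | hD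
  · rwa [show {q ∈ S | q ∉ (∅ : Finset α)} = S by ext; simp] at hcore
  obtain ⟨d, hdD, hmin⟩ := D.exists_minimal hD
  have hbelow : ∀ q ∈ D, ¬ q < d := fun q hq hlt => hlt.not_ge (hmin hq hlt.le)
  refine .step _ ⟨d, hDS hdD⟩ ?_ ?_
  · have h := hlink d hdD
    rw [show {q ∈ S | q ∉ D ∧ q < d} ∪ {q ∈ S | d < q} =
        {q | q ∈ S ∧ (comparabilityGraph α).Adj d q} by
      ext q
      simp only [Set.mem_union, Set.mem_ofPred_eq, comparabilityGraph_adj]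
      grind] at h
    exact h.of_iso (induceUnitSphereIso _ S ⟨d, hDS hdD⟩).symm
  refine (ih (D.erase d) (Finset.erase_ssubset hdD) (S := {q | q ∈ S ∧ q ≠ d}) ?_ ?_ ?_).of_iso
    (induceDeleteVertIso _ S ⟨d, hDS hdD⟩).symm
  · intro q hq
    exact ⟨hDS (Finset.mem_of_mem_erase hq), Finset.ne_of_mem_erase hq⟩
  · rwa [show {q ∈ {q | q ∈ S ∧ q ≠ d} | q ∉ D.erase d} = {q ∈ S | q ∉ D} by
      ext q
      simp only [Set.mem_ofPred_eq, Finset.mem_erase]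
      grind]
  · intro d' hd'
    have h := hlink d' (Finset.mem_of_mem_erase hd')
    have hd'd : ¬ d' < d := hbelow d' (Finset.mem_of_mem_erase hd')
    rwa [show {q ∈ {q | q ∈ S ∧ q ≠ d} | q ∉ D.erase d ∧ q < d'} ∪
        {q ∈ {q | q ∈ S ∧ q ≠ d} | d' < q} = {q ∈ S | q ∉ D ∧ q < d'} ∪ {q ∈ S | d' < q} by
      ext q
      simp only [Set.mem_union, Set.mem_ofPred_eq, Finset.mem_erase]
      grind]

end comparabilityGraph

def Set.InvOn.orderIso {γ δ : Type*} [Preorder γ] [Preorder δ] {S : Set γ} {T : Set δ}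
    {f : γ → δ} {g : δ → γ} (h : Set.InvOn g f S T) (hf : Set.MapsTo f S T)
    (hg : Set.MapsTo g T S) (hle : ∀ a ∈ S, ∀ b ∈ S, f a ≤ f b ↔ a ≤ b) : S ≃o T where
  toFun a := ⟨f a, hf a.2⟩
  invFun b := ⟨g b, hg b.2⟩
  left_inv a := Subtype.ext (h.1 a.2)
  right_inv b := Subtype.ext (h.2 b.2)
  map_rel_iff' {a b} := hle a.1 a.2 b.1 b.2

section FinsetFamilies

variable {α : Type u}

theorem comparabilityGraph.graphContractible_induce_of_peel_mem {S : Set (Finset α)}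
    (hS : S.Finite) (a : α) (hcore : GraphContractible (Γ {q ∈ S | a ∉ q}))
    (hlink : ∀ d ∈ S, a ∈ d →
      GraphContractible (Γ ({q ∈ S | a ∉ q ∧ q < d} ∪ {q ∈ S | d < q}))) :
    GraphContractible (Γ S) := by
  classical
  refine graphContractible_induce_of_peel (hS.toFinset.filter (a ∈ ·))
    (fun q hq => by simp_all) ?_ fun d hd => ?_
  · rwa [show {q ∈ S | q ∉ hS.toFinset.filter (a ∈ ·)} = {q ∈ S | a ∉ q} by
      ext q; simp +contextual]
  · simp only [Finset.mem_filter, Set.Finite.mem_toFinset] at hd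
    rw [show {q ∈ S | q ∉ hS.toFinset.filter (a ∈ ·) ∧ q < d} = {q ∈ S | a ∉ q ∧ q < d} by
      ext q; simp +contextual]
    exact hlink d hd.1 hd.2

theorem comparabilityGraph.graphContractible_induce_link_of_erase_mem [DecidableEq α]
    {S : Set (Finset α)} (hS : S.Finite) {a : α} {d : Finset α} (had : a ∈ d)
    (hd : d.erase a ∈ S) :
    GraphContractible (Γ ({q ∈ S | a ∉ q ∧ q < d} ∪ {q ∈ S | d < q})) := by
  refine graphContractible_induce_of_comparable
    ((hS.subset fun q hq => hq.1).union (hS.subset fun q hq => hq.1))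
    (Or.inl ⟨hd, Finset.notMem_erase a d, Finset.erase_ssubset had⟩) ?_
  rintro q (⟨-, haq, hqd⟩ | ⟨-, hdq⟩) hne
  · exact Or.inl (lt_of_le_of_ne (Finset.subset_erase.2 ⟨hqd.le, haq⟩) hne)
  · exact Or.inr ((Finset.erase_ssubset had).trans hdq)

def sdiffOrderIso [DecidableEq α] (y : Finset α) {S T : Set (Finset α)}
    (hS : ∀ s ∈ S, y ⊆ s ∧ s \ y ∈ T) (hT : ∀ t ∈ T, Disjoint t y ∧ t ∪ y ∈ S) : S ≃o T :=
  Set.InvOn.orderIso (f := (· \ y)) (g := (· ∪ y))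
    ⟨fun s hs => Finset.sdiff_union_of_subset (hS s hs).1,
      fun t ht => Finset.union_sdiff_cancel_right (hT t ht).1⟩
    (fun s hs => (hS s hs).2) (fun t ht => (hT t ht).2) fun s hs t ht =>
    ⟨fun h => by simpa only [Finset.sdiff_union_of_subset (hS s hs).1,
      Finset.sdiff_union_of_subset (hS t ht).1] using Finset.union_subset_union h (le_refl y),
      fun h => Finset.sdiff_subset_sdiff h le_rfl⟩

end FinsetFamilies

section SurjFaces

variable {α : Type u} {β : Type v}

theorem Finset.nonempty_of_surjOn_univ [Nonempty β] {f : α → β} {s : Finset α}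
    (h : Set.SurjOn f ↑s Set.univ) : s.Nonempty := by
  obtain ⟨a, ha, -⟩ := h (Set.mem_univ (Classical.arbitrary β))
  exact ⟨a, ha⟩

theorem Finset.card_le_card_of_surjOn_univ [Fintype β] {f : α → β} {s : Finset α}
    (h : Set.SurjOn f ↑s Set.univ) : Fintype.card β ≤ s.card := by
  simpa using Finset.card_le_card_of_surjOn f (t := Finset.univ) (by simpa using h)

theorem Finset.surjOn_const_univ_iff {s : Finset α} :
    Set.SurjOn (fun _ : α => PUnit.unit.{v + 1}) ↑s Set.univ ↔ s.Nonempty :=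
  ⟨Finset.nonempty_of_surjOn_univ, fun ⟨a, ha⟩ _ _ => ⟨a, ha, rfl⟩⟩

theorem Set.SurjOn.finset_erase [DecidableEq α] {f : α → β} {x : Finset α}
    (h : Set.SurjOn f ↑x Set.univ) {a b : α} (ha : a ∈ x) (hab : a ≠ b) (hf : f a = f b) :
    Set.SurjOn f ↑(x.erase b) Set.univ := by
  intro c _
  obtain ⟨u, hu, rfl⟩ := h (Set.mem_univ c)
  by_cases hub : u = b
  · exact ⟨a, by simp [ha, hab], hub ▸ hf⟩
  · exact ⟨u, by simp [hu, hub], rfl⟩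

def surjFaces (f : α → β) (x : Finset α) : Set (Finset α) :=
  {s | s ⊂ x ∧ Set.SurjOn f ↑s Set.univ}

theorem surjFaces_finite (f : α → β) (x : Finset α) : (surjFaces f x).Finite :=
  x.powerset.finite_toSet.subset fun _ hs => Finset.mem_coe.2 (Finset.mem_powerset.2 hs.1.le)

theorem sep_surjFaces_lt {f : α → β} {s x : Finset α} (hsx : s ⊂ x) :
    {q ∈ surjFaces f x | q < s} = surjFaces f s := by
  ext q
  exact ⟨fun h => ⟨h.2, h.1.2⟩, fun h => ⟨⟨h.1.trans hsx, h.2⟩, h.1⟩⟩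

theorem sep_surjFaces_gt {f : α → β} {s x : Finset α} (hs : Set.SurjOn f ↑s Set.univ) :
    {q ∈ surjFaces f x | s < q} = Set.Ioo s x := by
  ext q
  exact ⟨fun h => ⟨h.2, h.1.1⟩,
    fun h => ⟨⟨h.2, hs.mono (Finset.coe_subset.2 h.1.le) subset_rfl⟩, h.1⟩⟩

variable [DecidableEq α]

-- For a constant `f`, `surjFaces f x` is the boundary complex of the simplex `x`.
def orderIsoIooSurjFaces {d x : Finset α} (hdx : d ⊆ x) :
    Set.Ioo d x ≃o surjFaces (fun _ : α => PUnit.unit.{v + 1}) (x \ d) :=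
  sdiffOrderIso d
    (fun _ hq => ⟨hq.1.le, sdiff_lt_sdiff_right hq.2 hq.1.le,
      Finset.surjOn_const_univ_iff.2 (Finset.sdiff_nonempty.2 hq.1.not_ge)⟩)
    fun t ht =>
      have hdisj : Disjoint t d := Finset.disjoint_of_subset_left ht.1.le Finset.sdiff_disjoint
      ⟨hdisj, right_lt_sup.2 fun h =>
        (Finset.surjOn_const_univ_iff.1 ht.2).ne_empty (hdisj.eq_bot_of_le h),
        Finset.union_comm d t ▸ sup_lt_of_lt_sdiff_left ht.1 hdx⟩

variable {f : α → β}

theorem surjFaces_ne_link_eq_Ioo {x d e : Finset α} {a : α} (hd : d ∈ surjFaces f x)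
    (hda : ¬ Set.SurjOn f ↑(d.erase a) Set.univ) :
    {q ∈ {s ∈ surjFaces f x | s ≠ e} | a ∉ q ∧ q < d} ∪
      {q ∈ {s ∈ surjFaces f x | s ≠ e} | d < q} = {q ∈ Set.Ioo d x | q ≠ e} := by
  rw [← sep_surjFaces_gt hd.2]
  ext q
  constructor
  · rintro (⟨⟨⟨-, hqf⟩, -⟩, haq, hqd⟩ | ⟨⟨hq, hqe⟩, hdq⟩)
    · exact absurd (hqf.mono (Finset.coe_subset.2 (Finset.subset_erase.2 ⟨hqd.le, haq⟩))
        subset_rfl) hda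
    · exact ⟨⟨hq, hdq⟩, hqe⟩
  · rintro ⟨⟨hq, hdq⟩, hqe⟩
    exact Or.inr ⟨⟨hq, hqe⟩, hdq⟩

theorem graphContractible_surjFaces_ne_erase {x : Finset α} (hx : Set.SurjOn f ↑x Set.univ)
    {a b : α} (ha : a ∈ x) (hb : b ∈ x) (hab : a ≠ b) (hf : f a = f b) :
    GraphContractible (Γ {s ∈ surjFaces f x | s ≠ x.erase b}) := by
  induction hn : x.card using Nat.strong_induction_on generalizing β x a b with
  | _ n ih =>
  subst hn
  have hS : {s ∈ surjFaces f x | s ≠ x.erase b}.Finite :=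
    (surjFaces_finite f x).subset fun _ hs => hs.1
  have haxb : a ∈ x.erase b := Finset.mem_erase.2 ⟨hab, ha⟩
  refine comparabilityGraph.graphContractible_induce_of_peel_mem hS a ?_ fun d hd had => ?_
  · refine comparabilityGraph.graphContractible_induce_of_comparable
      (hS.subset fun q hq => hq.1)
      ⟨⟨⟨Finset.erase_ssubset ha, hx.finset_erase hb hab.symm hf.symm⟩, fun h => ?_⟩,
        Finset.notMem_erase a x⟩
      fun q hq hne => Or.inl (lt_of_le_of_ne (Finset.subset_erase.2 ⟨hq.1.1.1.le, hq.2⟩) hne)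
    exact Finset.notMem_erase a x (h ▸ haxb)
  obtain ⟨⟨hdx, hdf⟩, hdb⟩ := hd
  by_cases hda : Set.SurjOn f ↑(d.erase a) Set.univ
  · refine comparabilityGraph.graphContractible_induce_link_of_erase_mem hS had
      ⟨⟨(Finset.erase_ssubset had).trans hdx, hda⟩, fun h => ?_⟩
    exact Finset.notMem_erase a d (h ▸ haxb)
  -- Otherwise the link of `d` is a punctured boundary complex of `x \ d`.
  have hbd : b ∉ d := fun hbd => hda (hdf.finset_erase hbd hab.symm hf.symm)
  have hdxb : d < x.erase b := lt_of_le_of_ne (Finset.subset_erase.2 ⟨hdx.le, hbd⟩) hdb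
  obtain ⟨c, hc, hcb⟩ : ∃ c ∈ x \ d, c ≠ b := by
    obtain ⟨c, hc, hcd⟩ := Finset.exists_of_ssubset hdxb
    exact ⟨c, Finset.mem_sdiff.2 ⟨Finset.mem_of_mem_erase hc, hcd⟩, Finset.ne_of_mem_erase hc⟩
  rw [surjFaces_ne_link_eq_Ioo ⟨hdx, hdf⟩ hda]
  refine comparabilityGraph.graphContractible_induce_ne_of_orderIso
    (orderIsoIooSurjFaces hdx.le) ⟨x.erase b, hdxb, Finset.erase_ssubset hb⟩ ?_
  rw [show ((orderIsoIooSurjFaces.{u, v} hdx.le) ⟨x.erase b, hdxb, Finset.erase_ssubset hb⟩).1 =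
    (x \ d).erase b from Finset.erase_sdiff_comm x d b]
  exact ih _ (Finset.card_lt_card (Finset.sdiff_ssubset hdx.le ⟨a, had⟩))
    (Finset.surjOn_const_univ_iff.2 ⟨c, hc⟩) hc (Finset.mem_sdiff.2 ⟨hb, hbd⟩) hcb rfl rfl

theorem graphSphere_surjFaces [Fintype β] [Nonempty β] {x : Finset α}
    (hx : Set.SurjOn f ↑x Set.univ) :
    GraphSphere (x.card - Fintype.card β - 1) (Γ (surjFaces f x)) := by
  induction hn : x.card using Nat.strong_induction_on generalizing β x with
  | _ n ih =>
  subst hn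
  rcases (Finset.card_le_card_of_surjOn_univ hx).eq_or_lt with hcard | hlt
  · have : IsEmpty (surjFaces f x) := ⟨fun s => (Finset.card_lt_card s.2.1).not_ge
      (hcard ▸ Finset.card_le_card_of_surjOn_univ s.2.2)⟩
    convert GraphSphere.empty _ this using 1
    omega
  obtain ⟨a, ha, b, hb, hab, hf⟩ := Finset.exists_ne_map_eq_of_card_lt_of_maps_to
    (t := Finset.univ) (f := f) (by simpa using hlt) fun _ _ => Finset.mem_coe.2 (Finset.mem_univ _)
  refine .succ _ _ (by omega) (fun s => ?_) ?_
  · obtain ⟨s, hsx, hsf⟩ := s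
    have h₁ := ih s.card (Finset.card_lt_card hsx) hsf rfl
    have h₂ := (ih (x \ s).card (Finset.card_lt_card (Finset.sdiff_ssubset hsx.le
      (Finset.nonempty_of_surjOn_univ hsf)))
      (Finset.surjOn_const_univ_iff.2 (Finset.sdiff_nonempty.2 hsx.not_ge)) rfl).of_iso
      (comparabilityGraph.induceIsoOfOrderIso (orderIsoIooSurjFaces hsx.le)).symm
    rw [← sep_surjFaces_lt hsx] at h₁
    rw [← sep_surjFaces_gt hsf] at h₂
    have := ((surjFaces_finite f x).subset fun q (hq : q ∈ {q ∈ surjFaces f x | s < q}) =>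
      hq.1).to_subtype
    convert (h₁.graphJoin h₂).of_iso
      (comparabilityGraph.induceUnitSphereJoinIso (surjFaces f x) ⟨s, hsx, hsf⟩).symm using 1
    rw [Finset.card_sdiff_of_subset hsx.le, Fintype.card_punit, Nat.cast_sub
      (Finset.card_le_card hsx.le)]
    ring
  · have hxb : x.erase b ∈ surjFaces f x :=
      ⟨Finset.erase_ssubset hb, hx.finset_erase ha hab hf⟩
    exact ⟨⟨x.erase b, hxb⟩, (graphContractible_surjFaces_ne_erase hx ha hb hab hf).of_iso
      (induceDeleteVertIso _ _ ⟨x.erase b, hxb⟩).symm⟩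

end SurjFaces

namespace SimpleGraph

variable {W : Type u} (H : SimpleGraph W)

def nonemptyCliques : Set (Finset W) := {s | s.Nonempty ∧ H.IsClique ↑s}

def surjCliques {β : Type v} (f : W → β) : Set (Finset W) :=
  {s | s ∈ H.nonemptyCliques ∧ Set.SurjOn f ↑s Set.univ}

def commonNeighborSet (s : Finset W) : Set W := {u | ∀ v ∈ s, H.Adj v u}

theorem singleton_mem_nonemptyCliques (v : W) : {v} ∈ H.nonemptyCliques :=
  ⟨Finset.singleton_nonempty v, by simp⟩

theorem surjCliques_const : H.surjCliques (fun _ => ()) = H.nonemptyCliques := by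
  ext s
  simp only [surjCliques, Finset.surjOn_const_univ_iff, Set.mem_ofPred_eq, and_iff_left_iff_imp]
  exact fun h => h.1

@[simp] theorem commonNeighborSet_singleton (v : W) :
    H.commonNeighborSet {v} = H.neighborSet v := by
  ext; simp [commonNeighborSet]

noncomputable def nonemptyCliquesInduceOrderIso (Q : Set W) :
    (H.induce Q).nonemptyCliques ≃o {t ∈ H.nonemptyCliques | ↑t ⊆ Q} := by
  classical
  refine Set.InvOn.orderIso (f := Finset.map (Function.Embedding.subtype _))
    (g := Finset.subtype (· ∈ Q)) ⟨fun t _ => by ext; simp, fun t ht => ?_⟩ ?_ ?_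
    fun _ _ _ _ => Finset.map_subset_map
  · exact Finset.subtype_map_of_mem fun a ha => ht.2 ha
  · rintro t ⟨hne, hcl⟩
    refine ⟨⟨hne.map, ?_⟩, Finset.map_subtype_subset t⟩
    simpa [isClique_induce_iff] using hcl
  · rintro t ⟨⟨hne, hcl⟩, htQ⟩
    obtain ⟨a, ha⟩ := hne
    refine ⟨⟨⟨a, htQ ha⟩, by simpa using ha⟩, ?_⟩
    rw [isClique_induce_iff]
    convert hcl
    ext a
    simpa using fun ha => htQ ha

variable {H}

noncomputable def orderIsoNonemptyCliquesCommonNeighborSet [DecidableEq W] {z : Finset W}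
    (hz : z ∈ H.nonemptyCliques) :
    {q ∈ H.nonemptyCliques | z < q} ≃o (H.induce (H.commonNeighborSet z)).nonemptyCliques :=
  (sdiffOrderIso z (S := {q ∈ H.nonemptyCliques | z < q})
    (T := {t ∈ H.nonemptyCliques | ↑t ⊆ H.commonNeighborSet z})
    (fun q ⟨⟨_, hq⟩, hzq⟩ => ⟨hzq.le, ⟨Finset.sdiff_nonempty.2 hzq.not_ge,
      hq.subset (Finset.coe_subset.2 Finset.sdiff_subset)⟩, fun u hu v hv =>
        hq (hzq.le hv) (Finset.mem_sdiff.1 hu).1 fun h => (Finset.mem_sdiff.1 hu).2 (h ▸ hv)⟩)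
    fun t ⟨⟨htne, htcl⟩, htz⟩ =>
      have hdisj : Disjoint t z :=
        Finset.disjoint_left.2 fun u hu huz => H.loopless.irrefl u (htz hu u huz)
      ⟨hdisj, ⟨⟨htne.mono Finset.subset_union_left, by
        have : Std.Symm H.Adj := ⟨fun _ _ h => h.symm⟩
        rw [Finset.coe_union, IsClique, Set.pairwise_union_of_symm]
        exact ⟨htcl, hz.2, fun a ha b hb _ => (htz ha b hb).symm⟩⟩,
        right_lt_sup.2 fun h => htne.ne_empty (hdisj.eq_bot_of_le h)⟩⟩).trans
    (H.nonemptyCliquesInduceOrderIso _).symm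

theorem _root_.IsGraphManifold.graphSphere_induce_commonNeighborSet {q : ℤ}
    (hH : IsGraphManifold q H) {z : Finset W} (hz : z ∈ H.nonemptyCliques) :
    GraphSphere (q - z.card) (H.induce (H.commonNeighborSet z)) := by
  obtain ⟨hne, hcl⟩ := hz
  induction hne using Finset.Nonempty.cons_induction with
  | singleton v =>
    rw [commonNeighborSet_singleton, Finset.card_singleton, Nat.cast_one]
    exact hH v
  | cons v s hvs hs ih =>
    have hcl' : H.IsClique ↑s :=
      hcl.subset (by rw [Finset.coe_cons]; exact Set.subset_insert _ _)
    have hv : v ∈ H.commonNeighborSet s := fun w hw =>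
      hcl (Finset.mem_cons.2 (Or.inr hw)) (Finset.mem_cons_self v s) fun h => hvs (h ▸ hw)
    have := ((ih hcl').isGraphManifold ⟨v, hv⟩).of_iso (induceUnitSphereIso H _ ⟨v, hv⟩)
    rw [show {u | u ∈ H.commonNeighborSet s ∧ H.Adj v u} = H.commonNeighborSet (s.cons v hvs) by
      ext u; simp [commonNeighborSet, and_comm]] at this
    convert this using 1
    simp only [Finset.card_cons]
    push_cast
    ring

theorem graphContractible_nonemptyCliques_ne_singleton [Finite W] {v : W}
    (h : GraphContractible (Γ (H.deleteVert v).nonemptyCliques)) :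
    GraphContractible (Γ {s ∈ H.nonemptyCliques | s ≠ {v}}) := by
  classical
  have hS : {s ∈ H.nonemptyCliques | s ≠ {v}}.Finite := Set.toFinite _
  refine comparabilityGraph.graphContractible_induce_of_peel_mem hS v ?_
    fun d ⟨⟨hdne, hdcl⟩, hdv⟩ hvd => ?_
  · have := h.of_iso
      (comparabilityGraph.induceIsoOfOrderIso (H.nonemptyCliquesInduceOrderIso {u | u ≠ v}))
    rwa [show {t ∈ H.nonemptyCliques | ↑t ⊆ {u | u ≠ v}} =
        {q ∈ {s ∈ H.nonemptyCliques | s ≠ {v}} | v ∉ q} by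
      ext q
      simp only [Set.mem_ofPred_eq, Set.subset_def, Finset.mem_coe]
      constructor
      · rintro ⟨hq, hqv⟩
        exact ⟨⟨hq, by rintro rfl; exact hqv v (Finset.mem_singleton_self v) rfl⟩,
          fun h => hqv v h rfl⟩
      · rintro ⟨⟨hq, -⟩, hvq⟩
        exact ⟨hq, fun u hu huv => hvq (huv ▸ hu)⟩] at this
  · exact comparabilityGraph.graphContractible_induce_link_of_erase_mem hS hvd
      ⟨⟨((Finset.nontrivial_iff_ne_singleton hvd).2 hdv).erase_nonempty,
        hdcl.subset (Finset.coe_subset.2 (Finset.erase_subset v d))⟩,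
        fun h => Finset.notMem_erase v d (h ▸ Finset.mem_singleton_self v)⟩

theorem _root_.GraphContractible.nonemptyCliques (h : GraphContractible H) [Finite W] :
    GraphContractible (Γ H.nonemptyCliques) := by
  revert ‹Finite W›
  induction h with
  | @single W H hne hsub =>
    intro
    obtain ⟨w⟩ := hne
    refine comparabilityGraph.graphContractible_induce_of_comparable (Set.toFinite _)
      (H.singleton_mem_nonemptyCliques w) fun q ⟨⟨b, hb⟩, _⟩ hne => ?_
    exact absurd (Finset.eq_singleton_iff_unique_mem.2
      ⟨Subsingleton.elim b w ▸ hb, fun a _ => Subsingleton.elim a w⟩) hne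
  | @step W H v _ _ ihS ihD =>
    intro
    classical
    have hv := H.singleton_mem_nonemptyCliques v
    refine .step _ ⟨{v}, hv⟩ ?_ ((graphContractible_nonemptyCliques_ne_singleton ihD).of_iso
      (induceDeleteVertIso _ _ ⟨{v}, hv⟩).symm)
    have h : GraphContractible (Γ (H.induce (H.commonNeighborSet {v})).nonemptyCliques) := by
      rw [commonNeighborSet_singleton]
      exact ihS
    have := h.of_iso (comparabilityGraph.induceIsoOfOrderIso
      (orderIsoNonemptyCliquesCommonNeighborSet hv)).symm
    rw [show {q ∈ H.nonemptyCliques | {v} < q} =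
        {q | q ∈ H.nonemptyCliques ∧ (comparabilityGraph _).Adj {v} q} by
      ext q
      simp only [Set.mem_ofPred_eq, comparabilityGraph_adj, and_congr_right_iff]
      exact fun hq => (or_iff_left fun h => hq.1.ne_empty (Finset.ssubset_singleton_iff.1 h)).symm]
      at this
    exact this.of_iso (induceUnitSphereIso _ _ ⟨{v}, hv⟩).symm

variable (H) in
theorem graphSphere_unitSphere_surjCliques [Finite W] {β : Type v} [Fintype β] [Nonempty β]
    {f : W → β} {z : Finset W} (hz : z ∈ H.surjCliques f) {p : ℤ}
    (hp : GraphSphere p (Γ (H.induce (H.commonNeighborSet z)).nonemptyCliques)) :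
    GraphSphere (z.card - Fintype.card β + p) ((Γ (H.surjCliques f)).unitSphere ⟨z, hz⟩) := by
  classical
  have h₁ := graphSphere_surjFaces hz.2
  rw [show surjFaces f z = {q ∈ H.surjCliques f | q < z} by
    ext q
    exact ⟨fun ⟨hqz, hqf⟩ => ⟨⟨⟨Finset.nonempty_of_surjOn_univ hqf,
      hz.1.2.subset (Finset.coe_subset.2 hqz.le)⟩, hqf⟩, hqz⟩,
      fun ⟨⟨_, hqf⟩, hqz⟩ => ⟨hqz, hqf⟩⟩] at h₁
  have h₂ := hp.of_iso (comparabilityGraph.induceIsoOfOrderIso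
    (orderIsoNonemptyCliquesCommonNeighborSet hz.1)).symm
  rw [show {q ∈ H.nonemptyCliques | z < q} = {q ∈ H.surjCliques f | z < q} by
    ext q
    exact ⟨fun ⟨hq, hzq⟩ => ⟨⟨hq, hz.2.mono (Finset.coe_subset.2 hzq.le) subset_rfl⟩, hzq⟩,
      fun ⟨⟨hq, _⟩, hzq⟩ => ⟨hq, hzq⟩⟩] at h₂
  convert (h₁.graphJoin h₂).of_iso
    (comparabilityGraph.induceUnitSphereJoinIso (H.surjCliques f) ⟨z, hz⟩).symm using 1
  ring

end SimpleGraph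

theorem GraphSphere.nonemptyCliques {W : Type u} [Finite W] {H : SimpleGraph W} {q : ℤ}
    (h : GraphSphere q H) : GraphSphere q (Γ H.nonemptyCliques) := by
  cases h with
  | empty _ hE => exact .empty _ ⟨fun s => hE.false s.2.1.choose⟩
  | succ _ q hq hS hv =>
    rw [← H.surjCliques_const]
    refine .succ _ q hq (fun ⟨z, hz⟩ => ?_) ?_
    · have hcard := hz.1.1.card_pos -- makes the recursive call below decreasing
      convert H.graphSphere_unitSphere_surjCliques hz
        (IsGraphManifold.graphSphere_induce_commonNeighborSet hS hz.1).nonemptyCliques using 1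
      simp
    · obtain ⟨v, hv⟩ := hv
      have hv' : {v} ∈ H.surjCliques (fun _ => ()) := by
        rw [H.surjCliques_const]
        exact H.singleton_mem_nonemptyCliques v
      refine ⟨⟨{v}, hv'⟩, ?_⟩
      have := graphContractible_nonemptyCliques_ne_singleton hv.nonemptyCliques
      rw [← H.surjCliques_const] at this
      exact this.of_iso (induceDeleteVertIso _ _ ⟨{v}, hv'⟩).symm
termination_by (q + 1).toNat
decreasing_by omega

theorem level_set_is_manifold_general {V : Type} [Fintype V] (G : SimpleGraph V)
    (m k : ℕ) (hG : IsGraphManifold (m : ℤ) G)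
    (f : V → Fin (k + 1)) :
    IsEmpty {x : Finset V // x.Nonempty ∧ G.IsClique (↑x : Set V) ∧
        ∀ c : Fin (k + 1), ∃ v ∈ x, f v = c} ∨
    IsGraphManifold ((m : ℤ) - k)
      (SimpleGraph.fromRel
        (fun x y : {x : Finset V // x.Nonempty ∧ G.IsClique (↑x : Set V) ∧
            ∀ c : Fin (k + 1), ∃ v ∈ x, f v = c} => x.1 ⊂ y.1)) := by
  right
  have hlevel : {x : Finset V | x.Nonempty ∧ G.IsClique (↑x : Set V) ∧
      ∀ c : Fin (k + 1), ∃ v ∈ x, f v = c} = G.surjCliques f := by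
    ext x
    simp [surjCliques, nonemptyCliques, Set.SurjOn, Set.univ_subset_iff, Set.eq_univ_iff_forall,
      and_assoc]
  have key : IsGraphManifold ((m : ℤ) - k) (Γ (G.surjCliques f)) := fun ⟨z, hz⟩ => by
    convert G.graphSphere_unitSphere_surjCliques hz
      (hG.graphSphere_induce_commonNeighborSet hz.1).nonemptyCliques using 1
    simp
    ring
  rw [← hlevel, comparabilityGraph.induce_eq_fromRel] at key
  exact key

/-- Sard's theorem for discrete manifolds: for an `m`-manifold `G` and any function
`f` on the vertices with values in `{0, …, k}`, the graph `G_f` of cliques on which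
`f` attains all `k+1` values (ordered by strict inclusion) is either empty or an
`(m-k)`-manifold. -/
theorem level_set_is_manifold {V : Type} [Fintype V] (G : SimpleGraph V)
    (m k : ℕ) (hkm : k ≤ m) (hG : IsGraphManifold (m : ℤ) G)
    (f : V → Fin (k + 1)) :
    IsEmpty {x : Finset V // x.Nonempty ∧ G.IsClique (↑x : Set V) ∧
        ∀ c : Fin (k + 1), ∃ v ∈ x, f v = c} ∨
    IsGraphManifold ((m : ℤ) - k)
      (SimpleGraph.fromRel
        (fun x y : {x : Finset V // x.Nonempty ∧ G.IsClique (↑x : Set V) ∧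
            ∀ c : Fin (k + 1), ∃ v ∈ x, f v = c} => x.1 ⊂ y.1)) :=
  level_set_is_manifold_general G m k hG f
end

section
/- If G is any finite simple graph and H is a contractible finite simple graph, then the join G * H is contractible. -/
universe u

section

variable {V W : Type u}

theorem GraphContractible.of_iso_s15 {G : SimpleGraph V} (hG : GraphContractible G) :
    ∀ {W : Type u} {H : SimpleGraph W}, G ≃g H → GraphContractible H := by
  induction hG with
  | single G hne hsub => exact fun e => .single _ (hne.map e) e.symm.toEquiv.subsingleton
  | step G v _ _ ihS ihD =>
    intro W H e
    exact .step H (e v) (ihS (e.induce (e.toEquiv.bijOn fun _ => e.map_adj_iff)))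
      (ihD (e.induce (e.toEquiv.bijOn fun _ => e.injective.ne_iff)))

def graphJoinInduceIso (G : SimpleGraph V) (H : SimpleGraph W) {s : Set V} {t : Set (V ⊕ W)}
    (hl : ∀ a, Sum.inl a ∈ t ↔ a ∈ s) (hr : ∀ b, Sum.inr b ∈ t) :
    (graphJoin G H).induce t ≃g graphJoin (G.induce s) H where
  toEquiv := Equiv.subtypeSum.trans
    ((Equiv.subtypeEquivRight hl).sumCongr (Equiv.subtypeUnivEquiv hr))
  map_rel_iff' := by rintro ⟨a | b, _⟩ ⟨a' | b', _⟩ <;> rfl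

def graphJoinIsoOfIsEmpty [IsEmpty V] (G : SimpleGraph V) (H : SimpleGraph W) :
    graphJoin G H ≃g H where
  toEquiv := Equiv.emptySum V W
  map_rel_iff' := by rintro (a | b) (a' | b') <;> first | rfl | exact isEmptyElim ‹V›

def graphJoinUnitSphereIso (G : SimpleGraph V) (H : SimpleGraph W) (u : V) :
    (graphJoin G H).unitSphere (Sum.inl u) ≃g graphJoin (G.unitSphere u) H :=
  graphJoinInduceIso G H (fun _ => Iff.rfl) (fun _ => trivial)

def graphJoinDeleteVertIso (G : SimpleGraph V) (H : SimpleGraph W) (u : V) :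
    (graphJoin G H).deleteVert (Sum.inl u) ≃g graphJoin (G.deleteVert u) H :=
  graphJoinInduceIso G H (fun _ => Sum.inl_injective.ne_iff) (fun _ => Sum.inr_ne_inl)

/-- Induct on `|V|`: for `u : V`, the unit sphere and the deletion of `u` in `G * H` are
`S(u) * H` and `(G ∖ u) * H`, while for empty `V` the join is `H` itself. -/
theorem GraphContractible.join_left [Finite V] (G : SimpleGraph V) {H : SimpleGraph W}
    (hH : GraphContractible H) : GraphContractible (graphJoin G H) := by
  induction hn : Nat.card V using Nat.strong_induction_on generalizing V with
  | _ n ih =>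
  cases isEmpty_or_nonempty V with
  | inl => exact hH.of_iso_s15 (graphJoinIsoOfIsEmpty G H).symm
  | inr hV =>
    obtain ⟨u⟩ := hV
    refine .step _ (Sum.inl u) ?_ ?_
    · exact (ih _ (hn ▸ Finite.card_subtype_lt (G.irrefl (v := u))) (G.unitSphere u) rfl).of_iso_s15
        (graphJoinUnitSphereIso G H u).symm
    · exact (ih _ (hn ▸ Finite.card_subtype_lt (not_not.2 rfl)) (G.deleteVert u) rfl).of_iso_s15
        (graphJoinDeleteVertIso G H u).symm

end

theorem graphJoin_contractible_general {V W : Type} [Fintype V]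
    (G : SimpleGraph V) (H : SimpleGraph W) (hH : GraphContractible H) :
    GraphContractible (graphJoin G H) :=
  hH.join_left G

/-- The join of an arbitrary finite graph with a contractible finite graph is
contractible. -/
theorem graphJoin_contractible {V W : Type} [Fintype V] [Fintype W]
    (G : SimpleGraph V) (H : SimpleGraph W) (hH : GraphContractible H) :
    GraphContractible (graphJoin G H) :=
  graphJoin_contractible_general G H hH
end

section
/- Gauss–Bonnet for graphs: for every finite simple graph G, the sum of the curvatures over all vertices equals the Euler characteristic: Σ_{v ∈ V(G)} K(v) = χ(G), where the curvature of a vertex v is K(v) = Σ_{x clique of G with v ∈ x} (−1)^{|x|−1} / |x| (a rational number). -/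
universe u

/-!
A clique `x` with `n` vertices contributes `(-1)^(n-1)/n` to the curvature of each of its `n`
vertices, so summing the curvatures over all vertices counts every clique exactly once, with
weight `(-1)^(n-1)`. Grouping the cliques by their number of vertices gives `χ(G)`.
-/

open Finset

theorem Finset.sum_sum_filter_mem_div_card {α K : Type*} [Fintype α] [DecidableEq α]
    [Field K] [CharZero K] (S : Finset (Finset α)) (hS : ∀ x ∈ S, x.Nonempty)
    (f : Finset α → K) :
    ∑ a, ∑ x ∈ S with a ∈ x, f x / #x = ∑ x ∈ S, f x := by
  rw [sum_comm' (t' := S) (s' := id) (by simp [and_comm])]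
  refine sum_congr rfl fun x hx => ?_
  have hx : (#x : K) ≠ 0 := Nat.cast_ne_zero.mpr (hS x hx).card_pos.ne'
  rw [sum_const, nsmul_eq_mul, id, mul_div_cancel₀ _ hx]

theorem Finset.sum_neg_one_pow_card_sub_one {α R : Type*} [Fintype α] [CommRing R]
    (S : Finset (Finset α)) (hS : ∀ x ∈ S, x.Nonempty) :
    ∑ x ∈ S, (-1 : R) ^ (#x - 1) =
      ∑ k ∈ range (Fintype.card α + 1), (-1 : R) ^ k * #{x ∈ S | #x = k + 1} := by
  have hmaps : ∀ x ∈ S, #x - 1 ∈ range (Fintype.card α + 1) := fun x _ =>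
    mem_range.mpr (by have := card_le_univ x; omega)
  rw [← sum_fiberwise_of_maps_to' hmaps]
  refine sum_congr rfl fun k _ => ?_
  have hfiber : {x ∈ S | #x - 1 = k} = {x ∈ S | #x = k + 1} :=
    filter_congr fun x hx => by have := (hS x hx).card_pos; omega
  rw [hfiber, sum_const, nsmul_eq_mul, mul_comm]

namespace SimpleGraph

variable {V : Type u} [Fintype V] (G : SimpleGraph V)

open Classical in
noncomputable def cliques : Finset (Finset V) := {x | x.Nonempty ∧ G.IsClique (x : Set V)}

@[simp]
theorem mem_cliques {x : Finset V} : x ∈ G.cliques ↔ x.Nonempty ∧ G.IsClique (x : Set V) := by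
  classical
  simp [cliques]

theorem nonempty_of_mem_cliques {G : SimpleGraph V} {x : Finset V} (hx : x ∈ G.cliques) :
    x.Nonempty :=
  ((mem_cliques G).mp hx).1

theorem graphCurvature_eq_sum_cliques [DecidableEq V] (v : V) :
    graphCurvature G v = ∑ x ∈ G.cliques with v ∈ x, (-1 : ℚ) ^ (#x - 1) / #x := by
  unfold graphCurvature
  congr 1
  ext x
  simp [and_assoc]

theorem graphFVec_eq_card_cliques (k : ℕ) : graphFVec G k = #{x ∈ G.cliques | #x = k + 1} := by
  unfold graphFVec
  congr 1
  ext x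
  simp only [mem_filter, mem_univ, true_and, mem_cliques]
  constructor
  · rintro ⟨hcard, hclique⟩
    exact ⟨⟨card_pos.mp (by omega), hclique⟩, hcard⟩
  · rintro ⟨⟨-, hclique⟩, hcard⟩
    exact ⟨hcard, hclique⟩

end SimpleGraph

/-- Gauss–Bonnet for graphs: the curvatures `K(v) = Σ_{x ∋ v} (-1)^(|x|-1)/|x|` add up
to the Euler characteristic. -/
theorem graph_gauss_bonnet {V : Type} [Fintype V] (G : SimpleGraph V) :
    ∑ v : V, graphCurvature G v = (graphEulerChar G : ℚ) := by
  classical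
  calc ∑ v, graphCurvature G v
      = ∑ v, ∑ x ∈ G.cliques with v ∈ x, (-1 : ℚ) ^ (#x - 1) / #x := by
        simp only [G.graphCurvature_eq_sum_cliques]
    _ = ∑ x ∈ G.cliques, (-1 : ℚ) ^ (#x - 1) :=
        sum_sum_filter_mem_div_card _ (fun _ => SimpleGraph.nonempty_of_mem_cliques) _
    _ = graphEulerChar G := by
        rw [graphEulerChar]
        push_cast [G.graphFVec_eq_card_cliques]
        exact sum_neg_one_pow_card_sub_one _ fun _ => SimpleGraph.nonempty_of_mem_cliques
end

section
/- In dimension 1 the limiting density of states is the arcsine distribution on [0,4]: for every x ∈ [0,4], the fraction of eigenvalues of the Kirchhoff Laplacian of the cycle graph C_n that are at most x, namely (1/n) · card{k ∈ {0,…,n−1} : 2 − 2·cos(2πk/n) ≤ x}, converges to (2/π) · arcsin(√x / 2) as n → ∞. (The eigenvalues of the Kirchhoff Laplacian of C_n are exactly 2 − 2·cos(2πk/n) for k = 0, …, n−1.) -/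
/-!
Put `t = arcsin (√x / 2) / π ∈ [0, 1/2]`, so that `x = 2 - 2 cos (2πt)`. On `[0, 1]` the function
`cos (2π ·)` drops below `cos (2πt)` exactly on the middle interval `(t, 1 - t)`, so the eigenvalue
`2 - 2 cos (2πk/n)` exceeds `x` exactly when `k/n ∈ (t, 1 - t)`. That interval contains
`n (1 - 2t) + O(1)` of the `k < n`, hence the fraction of eigenvalues at most `x` tends to `2t`.
-/

open Filter Real Finset

theorem cos_two_mul_arcsin_sqrt_div_two {x : ℝ} (hx0 : 0 ≤ x) (hx4 : x ≤ 4) :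
    cos (2 * arcsin (√x / 2)) = 1 - x / 2 := by
  have hsqrt : √x ≤ 2 := by
    simpa [show √(4 : ℝ) = 2 by rw [show (4 : ℝ) = 2 ^ 2 by norm_num, sqrt_sq zero_le_two]]
      using sqrt_le_sqrt hx4
  rw [cos_two_mul_eq_one_sub, sin_arcsin (by linarith [sqrt_nonneg x]) (by linarith), div_pow,
    sq_sqrt hx0]
  ring

theorem cos_two_pi_mul_lt_iff_of_le_half {t v : ℝ} (ht0 : 0 ≤ t) (ht : t ≤ 1 / 2)
    (hv0 : 0 ≤ v) (hv : v ≤ 1 / 2) : cos (2 * π * v) < cos (2 * π * t) ↔ t < v := by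
  have mem {s : ℝ} (hs0 : 0 ≤ s) (hs : s ≤ 1 / 2) : 2 * π * s ∈ Set.Icc 0 π :=
    ⟨by positivity, by nlinarith [pi_pos]⟩
  rw [strictAntiOn_cos.lt_iff_gt (mem hv0 hv) (mem ht0 ht)]
  exact mul_lt_mul_iff_right₀ (by positivity)

theorem cos_two_pi_mul_lt_iff {t u : ℝ} (ht0 : 0 ≤ t) (ht : t ≤ 1 / 2) (hu0 : 0 ≤ u) (hu1 : u ≤ 1) :
    cos (2 * π * u) < cos (2 * π * t) ↔ t < u ∧ u < 1 - t := by
  rcases le_total u (1 / 2) with hu | hu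
  · rw [cos_two_pi_mul_lt_iff_of_le_half ht0 ht hu0 hu]
    exact ⟨fun h => ⟨h, by linarith⟩, And.left⟩
  · have hsymm : cos (2 * π * u) = cos (2 * π * (1 - u)) := by
      rw [← cos_two_pi_sub]; ring_nf
    rw [hsymm, cos_two_pi_mul_lt_iff_of_le_half ht0 ht (by linarith) (by linarith)]
    exact ⟨fun h => ⟨by linarith, by linarith⟩, fun h => by linarith [h.2]⟩

theorem abs_card_filter_range_mem_Ioo_sub_le {n : ℕ} {α β : ℝ} (hα : 0 ≤ α) (hαβ : α ≤ β)
    (hβ : β ≤ n) : |(((range n).filter fun k : ℕ => α < k ∧ k < β).card : ℝ) - (β - α)| ≤ 1 := by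
  have hIoo : (range n).filter (fun k : ℕ => α < k ∧ k < β) = Ioo ⌊α⌋₊ ⌈β⌉₊ := by
    ext k
    simp only [mem_filter, mem_range, mem_Ioo, Nat.floor_lt hα, Nat.lt_ceil]
    constructor
    · exact And.right
    · intro h
      exact ⟨by exact_mod_cast h.2.trans_le hβ, h⟩
  have hfloor := Nat.floor_le hα
  have hfloor' := Nat.lt_floor_add_one α
  have hceil := Nat.le_ceil β
  have hceil' := Nat.ceil_lt_add_one (hα.trans hαβ)
  rw [hIoo, Nat.card_Ioo, abs_le]
  rcases Nat.lt_or_ge ⌊α⌋₊ ⌈β⌉₊ with h | h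
  · rw [Nat.cast_sub (by omega), Nat.cast_sub h.le]
    push_cast
    constructor <;> linarith
  · rw [Nat.sub_eq_zero_of_le (by omega)]
    have : (⌈β⌉₊ : ℝ) ≤ ⌊α⌋₊ := by exact_mod_cast h
    constructor <;> push_cast <;> linarith

theorem tendsto_div_natCast_of_abs_sub_mul_le {u : ℕ → ℝ} {c C : ℝ}
    (h : ∀ᶠ n in atTop, |u n - n * c| ≤ C) :
    Tendsto (fun n : ℕ => u n / n) atTop (nhds c) := by
  rw [tendsto_iff_norm_sub_tendsto_zero]
  refine squeeze_zero' (Eventually.of_forall fun n => norm_nonneg _) ?_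
    (tendsto_const_div_atTop_nhds_zero_nat C)
  filter_upwards [h, eventually_gt_atTop 0] with n hn hn0
  have hn0' : (0 : ℝ) < n := by exact_mod_cast hn0
  rw [Real.norm_eq_abs, show u n / n - c = (u n - n * c) / n by field_simp, abs_div,
    Nat.abs_cast]
  exact div_le_div_of_nonneg_right hn (le_of_lt hn0')

theorem tendsto_card_filter_range_div {a b : ℝ} (ha : 0 ≤ a) (hab : a ≤ b) (hb : b ≤ 1) :
    Tendsto (fun n : ℕ => (((range n).filter fun k : ℕ => a < k / n ∧ k / n < b).card : ℝ) / n)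
      atTop (nhds (b - a)) := by
  refine tendsto_div_natCast_of_abs_sub_mul_le (C := 1) ?_
  filter_upwards [eventually_gt_atTop 0] with n hn
  have hn' : (0 : ℝ) < n := by exact_mod_cast hn
  have hfilter : (range n).filter (fun k : ℕ => a < k / n ∧ k / n < b) =
      (range n).filter (fun k : ℕ => n * a < k ∧ k < n * b) := by
    refine filter_congr fun k _ => ?_
    rw [lt_div_iff₀ hn', div_lt_iff₀ hn', mul_comm a, mul_comm b]
  rw [hfilter, mul_sub]
  exact abs_card_filter_range_mem_Ioo_sub_le (by positivity) (by gcongr) (by nlinarith)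

/-- The limiting density of states in dimension one is the arcsine distribution on
`[0,4]`: the fraction of eigenvalues `2 - 2 cos (2πk/n)`, `k = 0, …, n-1`, of the
Kirchhoff Laplacian of the cycle graph `Cₙ` that are at most `x` converges to
`(2/π) arcsin (√x / 2)`. -/
theorem cycle_density_of_states_arcsin :
    ∀ x ∈ Set.Icc (0 : ℝ) 4,
      Tendsto (fun n : ℕ =>
          (((Finset.range n).filter
            (fun k : ℕ => 2 - 2 * Real.cos (2 * Real.pi * (k : ℝ) / (n : ℝ)) ≤ x)).card : ℝ) / n)
        atTop (nhds (2 / Real.pi * Real.arcsin (Real.sqrt x / 2))) := by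
  rintro x ⟨hx0, hx4⟩
  set t := arcsin (√x / 2) / π
  have ht0 : 0 ≤ t := div_nonneg (arcsin_nonneg.mpr (by positivity)) pi_pos.le
  have ht : t ≤ 1 / 2 := by
    rw [div_le_iff₀ pi_pos]; linarith [arcsin_le_pi_div_two (√x / 2)]
  have hπt : π * t = arcsin (√x / 2) := mul_div_cancel₀ _ pi_ne_zero
  have hx : 2 - 2 * cos (2 * π * t) = x := by
    rw [mul_assoc, hπt, cos_two_mul_arcsin_sqrt_div_two hx0 hx4]; ring
  have hlimit : 2 / π * arcsin (√x / 2) = 1 - ((1 - t) - t) := by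
    rw [← hπt]; field_simp; ring
  rw [hlimit]
  refine ((tendsto_card_filter_range_div ht0 (by linarith) (by linarith)).const_sub 1).congr' ?_
  filter_upwards [eventually_gt_atTop 0] with n hn
  have hn' : (0 : ℝ) < n := by exact_mod_cast hn
  have hspectrum : ∀ k ∈ range n, 2 - 2 * cos (2 * π * k / n) ≤ x ↔
      ¬ (t < k / n ∧ k / n < 1 - t) := by
    intro k hk
    have hk : (k : ℝ) / n ≤ 1 := (div_le_one hn').mpr (by exact_mod_cast (mem_range.mp hk).le)
    rw [← cos_two_pi_mul_lt_iff ht0 ht (by positivity) hk, not_lt, ← hx, mul_div_assoc]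
    constructor <;> intro h <;> linarith
  rw [filter_congr hspectrum, eq_div_iff hn'.ne', sub_mul, div_mul_cancel₀ _ hn'.ne', one_mul,
    sub_eq_iff_eq_add', ← Nat.cast_add, card_filter_add_card_filter_not, card_range]
end
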